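/- arXiv:math/0501433 — 8 statements merged into one kernel-verified Lean document; each statement's English description precedes it below -/
import Mathlib

section
/- Let R be a right po-coherent po-ring and let m ≥ 1. Then the matrix ring M_m(R) of m × m matrices over R, ordered componentwise, is a right po-coherent po-ring. -/
/-- A *po-ring*: a ring equipped with a partial order such that addition is
translation-invariant, multiplication by nonnegative elements (on either side) is monotone,
the ring is directed (every element is a difference of two nonnegative elements),
and `0 ≤ 1`. -/
class PORing (R : Type*) extends Ring R, PartialOrder R where
  add_le_add_right' : ∀ a b : R, a ≤ b → ∀ c : R, a + c ≤ b + c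
  mul_le_mul_of_nonneg_right' : ∀ a b c : R, a ≤ b → 0 ≤ c → a * c ≤ b * c
  mul_le_mul_of_nonneg_left' : ∀ a b c : R, a ≤ b → 0 ≤ c → c * a ≤ c * b
  directed' : ∀ x : R, ∃ y z : R, 0 ≤ y ∧ 0 ≤ z ∧ x = y - z
  zero_le_one' : (0 : R) ≤ 1

/-- A *partially ordered right module* over a po-ring `R`: an additive abelian group with a
right `R`-action `rsmul` (written on the right, so `rsmul a ξ` is `aξ`), with the usual
right-module axioms, such that addition is translation-invariant and
`0 ≤ a`, `0 ≤ ξ` imply `0 ≤ aξ`. -/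
class PORightModule (R : Type*) [PORing R] (A : Type*) [AddCommGroup A] [PartialOrder A] where
  rsmul : A → R → A
  add_rsmul : ∀ (a b : A) (r : R), rsmul (a + b) r = rsmul a r + rsmul b r
  rsmul_add : ∀ (a : A) (r s : R), rsmul a (r + s) = rsmul a r + rsmul a s
  rsmul_mul : ∀ (a : A) (r s : R), rsmul a (r * s) = rsmul (rsmul a r) s
  rsmul_one : ∀ a : A, rsmul a 1 = a
  add_le_add_right' : ∀ a b : A, a ≤ b → ∀ c : A, a + c ≤ b + c
  rsmul_nonneg : ∀ (a : A) (r : R), 0 ≤ a → 0 ≤ r → 0 ≤ rsmul a r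

open PORightModule

/-- A po-ring is a partially ordered right module over itself. -/
instance PORing.toPORightModule (R : Type*) [PORing R] : PORightModule R R where
  rsmul := (· * ·)
  add_rsmul := add_mul
  rsmul_add := mul_add
  rsmul_mul a r s := (mul_assoc a r s).symm
  rsmul_one := mul_one
  add_le_add_right' := PORing.add_le_add_right'
  rsmul_nonneg a r ha hr := by
    have h := PORing.mul_le_mul_of_nonneg_right' 0 a r ha hr
    simpa using h

/-- Products of partially ordered right modules, ordered coordinatewise. -/
instance Pi.instPORightModule {R : Type*} [PORing R] {ι : Type*} {A : ι → Type*}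
    [∀ i, AddCommGroup (A i)] [∀ i, PartialOrder (A i)] [∀ i, PORightModule R (A i)] :
    PORightModule R (∀ i, A i) where
  rsmul x r i := rsmul (x i) r
  add_rsmul a b r := funext fun i => add_rsmul (a i) (b i) r
  rsmul_add a r s := funext fun i => rsmul_add (a i) r s
  rsmul_mul a r s := funext fun i => rsmul_mul (a i) r s
  rsmul_one a := funext fun i => rsmul_one (a i)
  add_le_add_right' a b h c := by
    intro i
    exact PORightModule.add_le_add_right' R (a i) (b i) (h i) (c i)
  rsmul_nonneg a r ha hr := by
    intro i
    exact PORightModule.rsmul_nonneg (a i) r (ha i) hr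

/-- Binary products of partially ordered right modules, ordered coordinatewise. -/
instance Prod.instPORightModule {R : Type*} [PORing R] {A B : Type*}
    [AddCommGroup A] [PartialOrder A] [PORightModule R A]
    [AddCommGroup B] [PartialOrder B] [PORightModule R B] :
    PORightModule R (A × B) where
  rsmul x r := (rsmul x.1 r, rsmul x.2 r)
  add_rsmul a b r := by
    refine Prod.ext ?_ ?_ <;> simp [PORightModule.add_rsmul]
  rsmul_add a r s := by
    refine Prod.ext ?_ ?_ <;> simp [PORightModule.rsmul_add]
  rsmul_mul a r s := by
    refine Prod.ext ?_ ?_ <;> simp [PORightModule.rsmul_mul]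
  rsmul_one a := by
    refine Prod.ext ?_ ?_ <;> simp [PORightModule.rsmul_one]
  add_le_add_right' a b h c := by
    rw [Prod.le_def] at h ⊢
    constructor
    · simpa using PORightModule.add_le_add_right' R a.1 b.1 h.1 c.1
    · simpa using PORightModule.add_le_add_right' R a.2 b.2 h.2 c.2
  rsmul_nonneg a r ha hr := by
    rw [Prod.le_def] at ha ⊢
    constructor
    · simpa using PORightModule.rsmul_nonneg a.1 r (by simpa using ha.1) hr
    · simpa using PORightModule.rsmul_nonneg a.2 r (by simpa using ha.2) hr

section Defs

variable (R : Type*) [PORing R]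

/-- The product `UX = a₁ξ₁ + ⋯ + aₙξₙ` of a row matrix `U = (a₁,…,aₙ)` with entries in `A`
and a column matrix `X = (ξ₁,…,ξₙ)ᵗ` with entries in `R`. -/
def rowMul {A : Type*} [AddCommGroup A] [PartialOrder A] [PORightModule R A]
    {n : ℕ} (U : Fin n → A) (X : Fin n → R) : A :=
  ∑ i, rsmul (U i) (X i)

/-- A subset `S` of a partially ordered right `R`-module is a *finitely generated
`R⁺`-subsemimodule* if it is the set of all `R⁺`-linear combinations of some finite subset. -/
def IsFGConeIn {A : Type*} [AddCommGroup A] [PartialOrder A] [PORightModule R A]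
    (S : Set A) : Prop :=
  ∃ (k : ℕ) (g : Fin k → A),
    S = { a | ∃ Y : Fin k → R, (∀ i, 0 ≤ Y i) ∧ a = rowMul R g Y }

/-- `A` is *finitely related at* the row matrix `U ∈ M_{1,n}(A)` if the solution set of the
mixed system `UX ≥ 0, X ≥ 0` is a finitely generated `R⁺`-subsemimodule of `M_{n,1}(R)`. -/
def FinitelyRelatedAt {A : Type*} [AddCommGroup A] [PartialOrder A] [PORightModule R A]
    {n : ℕ} (U : Fin n → A) : Prop :=
  IsFGConeIn R {X : Fin n → R | 0 ≤ rowMul R U X ∧ ∀ i, 0 ≤ X i}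

/-- `A` is *finitely po-presented at* the row matrix `U ∈ M_{1,n}(A)` if the solution set of
the system `UX ≥ 0` is a finitely generated `R⁺`-subsemimodule of `M_{n,1}(R)`. -/
def FinitelyPoPresentedAt {A : Type*} [AddCommGroup A] [PartialOrder A] [PORightModule R A]
    {n : ℕ} (U : Fin n → A) : Prop :=
  IsFGConeIn R {X : Fin n → R | 0 ≤ rowMul R U X}

/-- A row matrix `U` is *spanning* if its entries generate `A` as a right `R`-module, i.e.
every element of `A` is an `R`-linear combination `UX` of the entries. -/
def SpanningRow {A : Type*} [AddCommGroup A] [PartialOrder A] [PORightModule R A]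
    {n : ℕ} (U : Fin n → A) : Prop :=
  ∀ a : A, ∃ X : Fin n → R, a = rowMul R U X

variable (A : Type*) [AddCommGroup A] [PartialOrder A] [PORightModule R A]

/-- `A` is *finitely po-presented* if it is finitely po-presented at some spanning row
matrix. -/
def FinitelyPoPresented : Prop :=
  ∃ (n : ℕ) (U : Fin n → A), SpanningRow R U ∧ FinitelyPoPresentedAt R U

/-- `A` is *finitely related* if it is a finitely generated right `R`-module and is finitely
related at every spanning row matrix. -/
def FinitelyRelatedMod : Prop :=
  (∃ (n : ℕ) (U : Fin n → A), SpanningRow R U) ∧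
    ∀ (n : ℕ) (U : Fin n → A), SpanningRow R U → FinitelyRelatedAt R U

/-- `A` is *po-coherent* if it is finitely related at every row matrix of elements of `A`. -/
def PoCoherent : Prop :=
  ∀ (n : ℕ) (U : Fin n → A), FinitelyRelatedAt R U

end Defs

/-- A po-ring is *right po-coherent* if it is po-coherent as a partially ordered right module
over itself. -/
def RightPoCoherent (R : Type*) [PORing R] : Prop :=
  PoCoherent R R

/-- Sums over finite sets are monotone in a po-ring. -/
theorem PORing.sum_le_sum {R : Type*} [PORing R] {ι : Type*} {s : Finset ι} {f g : ι → R}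
    (h : ∀ i ∈ s, f i ≤ g i) : ∑ i ∈ s, f i ≤ ∑ i ∈ s, g i := by
  classical
  induction s using Finset.induction_on with
  | empty => simp
  | @insert a s ha ih =>
    rw [Finset.sum_insert ha, Finset.sum_insert ha]
    have h1 : f a + ∑ i ∈ s, f i ≤ g a + ∑ i ∈ s, f i :=
      PORing.add_le_add_right' _ _ (h a (Finset.mem_insert_self a s)) _
    have h2 : g a + ∑ i ∈ s, f i ≤ g a + ∑ i ∈ s, g i := by
      rw [add_comm (g a), add_comm (g a)]
      exact PORing.add_le_add_right' _ _ (ih fun i hi => h i (Finset.mem_insert_of_mem hi)) _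
    exact le_trans h1 h2

/-- The componentwise (entrywise) partial order on square matrices over a po-ring. -/
instance Matrix.instPartialOrderOfPORing {R : Type*} [PORing R] {m : ℕ} :
    PartialOrder (Matrix (Fin m) (Fin m) R) :=
  inferInstanceAs (PartialOrder (Fin m → Fin m → R))

/-- The matrix ring `M_m(R)` over a po-ring, ordered componentwise, is a po-ring. -/
instance Matrix.instPORing {R : Type*} [PORing R] {m : ℕ} :
    PORing (Matrix (Fin m) (Fin m) R) where
  __ := (inferInstance : Ring (Matrix (Fin m) (Fin m) R))
  __ := (inferInstance : PartialOrder (Matrix (Fin m) (Fin m) R))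
  add_le_add_right' A B h C := by
    intro i j
    simpa [Matrix.add_apply] using PORing.add_le_add_right' (A i j) (B i j) (h i j) (C i j)
  mul_le_mul_of_nonneg_right' A B C h hC := by
    intro i j
    rw [Matrix.mul_apply, Matrix.mul_apply]
    refine PORing.sum_le_sum fun k _ => ?_
    exact PORing.mul_le_mul_of_nonneg_right' (A i k) (B i k) (C k j) (h i k)
      (by simpa using hC k j)
  mul_le_mul_of_nonneg_left' A B C h hC := by
    intro i j
    rw [Matrix.mul_apply, Matrix.mul_apply]
    refine PORing.sum_le_sum fun k _ => ?_
    exact PORing.mul_le_mul_of_nonneg_left' (A k j) (B k j) (C i k) (h k j)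
      (by simpa using hC i k)
  directed' X := by
    choose y z hy hz hxy using fun p : Fin m × Fin m => PORing.directed' (X p.1 p.2)
    refine ⟨Matrix.of fun i j => y (i, j), Matrix.of fun i j => z (i, j), ?_, ?_, ?_⟩
    · intro i j
      simpa using hy (i, j)
    · intro i j
      simpa using hz (i, j)
    · ext i j
      simpa [Matrix.sub_apply] using hxy (i, j)
  zero_le_one' := by
    intro i j
    simp only [Matrix.zero_apply, Matrix.one_apply]
    split_ifs
    · exact PORing.zero_le_one'
    · exact le_refl 0

/-!
Over `M_m(R)` the system `UX ≥ 0, X ≥ 0` decouples column by column: reading the block column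
`X = (X₁, …, Xₙ)ᵗ` as an `nm × m` matrix over `R`, it says that every column `ξ` satisfies
`ξ ≥ 0` together with the `m` inequalities `ρ_p ξ ≥ 0`, where `ρ_p` is the `p`-th row of the
block row `(U₁ ⋯ Uₙ)`.

Right po-coherence of `R` makes the solution cone of any finite system of such inequalities
finitely generated: intersecting the cone spanned by `g₁, …, g_k` with a half-space `aξ ≥ 0`
amounts to solving the single inequality `(a g₁, …, a g_k) Y ≥ 0, Y ≥ 0`, whose solutions are
finitely generated and are then pushed forward along `Y ↦ gY`. If `g₁, …, g_k` generate the
solution cone of the column system, the block columns all of whose columns equal `g_t`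
generate the solution cone of `U` over `M_m(R)`.
-/

section RowMul

variable {R : Type*} [PORing R]

lemma PORing.sum_nonneg {ι : Type*} {s : Finset ι} {f : ι → R} (h : ∀ i ∈ s, 0 ≤ f i) :
    0 ≤ ∑ i ∈ s, f i := by
  simpa using PORing.sum_le_sum h

lemma PORightModule.rsmul_sum {A : Type*} [AddCommGroup A] [PartialOrder A]
    [PORightModule R A] (a : A) {ι : Type*} (s : Finset ι) (r : ι → R) :
    rsmul a (∑ i ∈ s, r i) = ∑ i ∈ s, rsmul a (r i) :=
  map_sum (AddMonoidHom.mk' (rsmul a) (rsmul_add a)) r s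

lemma PORightModule.sum_rsmul {A : Type*} [AddCommGroup A] [PartialOrder A]
    [PORightModule R A] {ι : Type*} (s : Finset ι) (a : ι → A) (r : R) :
    rsmul (∑ i ∈ s, a i) r = ∑ i ∈ s, rsmul (a i) r :=
  map_sum (AddMonoidHom.mk' (fun x : A => rsmul x r) (fun x y => add_rsmul x y r)) a s

lemma rowMul_eq_sum_mul {n : ℕ} (a X : Fin n → R) : rowMul R a X = ∑ j, a j * X j := rfl

lemma rowMul_apply {ι : Type*} {A : ι → Type*} [∀ i, AddCommGroup (A i)]
    [∀ i, PartialOrder (A i)] [∀ i, PORightModule R (A i)] {k : ℕ} (g : Fin k → ∀ i, A i)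
    (Y : Fin k → R) (i : ι) : rowMul R g Y i = rowMul R (fun t => g t i) Y :=
  Finset.sum_apply i _ _

lemma rowMul_rowMul {A : Type*} [AddCommGroup A] [PartialOrder A] [PORightModule R A]
    {n k : ℕ} (U : Fin n → A) (g : Fin k → Fin n → R) (Y : Fin k → R) :
    rowMul R U (rowMul R g Y) = rowMul R (fun t => rowMul R U (g t)) Y := by
  simp only [rowMul, Finset.sum_apply, sum_rsmul, rsmul_sum]
  rw [Finset.sum_comm]
  simp only [← rsmul_mul]
  rfl

lemma rowMul_single_one {n : ℕ} (Y : Fin n → R) :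
    rowMul R (fun i => Pi.single i (1 : R)) Y = Y := by
  funext j
  simp [rowMul_apply, rowMul_eq_sum_mul, Pi.single_apply]

end RowMul

section Cones

variable (R : Type*) [PORing R]

def posSpan {A : Type*} [AddCommGroup A] [PartialOrder A] [PORightModule R A] {k : ℕ}
    (g : Fin k → A) : Set A :=
  {a | ∃ Y : Fin k → R, (∀ i, 0 ≤ Y i) ∧ a = rowMul R g Y}

variable {R}

lemma isFGConeIn_nonneg (n : ℕ) : IsFGConeIn R {X : Fin n → R | ∀ i, 0 ≤ X i} := by
  refine ⟨n, fun i => Pi.single i 1, ?_⟩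
  ext X
  simp only [Set.mem_ofPred_eq, rowMul_single_one]
  exact ⟨fun hX => ⟨X, hX, rfl⟩, fun ⟨Y, hY, hXY⟩ => hXY ▸ hY⟩

theorem RightPoCoherent.isFGConeIn_posSpan_inter (hR : RightPoCoherent R) {n k : ℕ}
    (g : Fin k → Fin n → R) (a : Fin n → R) :
    IsFGConeIn R (posSpan R g ∩ {X | 0 ≤ rowMul R a X}) := by
  obtain ⟨l, h, hh⟩ := hR k fun t => rowMul R a (g t)
  refine ⟨l, fun s => rowMul R g (h s), ?_⟩
  ext X
  constructor
  · rintro ⟨⟨Y, hY, rfl⟩, haY : 0 ≤ rowMul R a (rowMul R g Y)⟩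
    rw [rowMul_rowMul] at haY
    obtain ⟨Z, hZ, rfl⟩ : Y ∈ posSpan R h := by rw [posSpan, ← hh]; exact ⟨haY, hY⟩
    exact ⟨Z, hZ, rowMul_rowMul g h Z⟩
  · rintro ⟨Z, hZ, rfl⟩
    obtain ⟨haY, hY⟩ : rowMul R h Z ∈ {Y | 0 ≤ rowMul R (fun t => rowMul R a (g t)) Y ∧
        ∀ i, 0 ≤ Y i} := hh ▸ ⟨Z, hZ, rfl⟩
    rw [← rowMul_rowMul] at haY ⊢
    exact ⟨⟨_, hY, rfl⟩, haY⟩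

theorem RightPoCoherent.isFGConeIn_solutions (hR : RightPoCoherent R) {p n : ℕ}
    (A : Fin p → Fin n → R) :
    IsFGConeIn R {X | (∀ r, 0 ≤ rowMul R (A r) X) ∧ ∀ i, 0 ≤ X i} := by
  induction p with
  | zero => simpa using isFGConeIn_nonneg n
  | succ p ih =>
    obtain ⟨k, g, hg⟩ := ih fun r => A r.succ
    convert hR.isFGConeIn_posSpan_inter g (A 0) using 1
    rw [posSpan, ← hg]
    ext X
    simp only [Fin.forall_fin_succ, Set.mem_inter_iff, Set.mem_ofPred_eq]
    tauto

end Cones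

section Stacking

variable {R : Type*} {m n : ℕ}

/-- A column `(X₁, …, Xₙ)ᵗ` of `m × m` matrices is read as an `nm × m` matrix over `R`, with
rows indexed by `Fin n × Fin m ≃ Fin (n * m)`; this is its `q`-th column. -/
def stackCol (X : Fin n → Matrix (Fin m) (Fin m) R) (q : Fin m) : Fin (n * m) → R :=
  fun j => X (finProdFinEquiv.symm j).1 (finProdFinEquiv.symm j).2 q

def stackRow (U : Fin n → Matrix (Fin m) (Fin m) R) (p : Fin m) : Fin (n * m) → R :=
  fun j => U (finProdFinEquiv.symm j).1 p (finProdFinEquiv.symm j).2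

def constStackCol (ξ : Fin (n * m) → R) : Fin n → Matrix (Fin m) (Fin m) R :=
  fun i => Matrix.of fun r _ => ξ (finProdFinEquiv (i, r))

lemma stackCol_apply (X : Fin n → Matrix (Fin m) (Fin m) R) (q : Fin m) (i : Fin n)
    (r : Fin m) : stackCol X q (finProdFinEquiv (i, r)) = X i r q := by
  simp [stackCol]

lemma stackCol_injective :
    Function.Injective (stackCol : (Fin n → Matrix (Fin m) (Fin m) R) → _) := by
  intro X X' h
  funext i r q
  rw [← stackCol_apply X, ← stackCol_apply X', h]

end Stacking

section MatrixRing

variable {R : Type*} [PORing R] {m n : ℕ}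

lemma Matrix.nonneg_iff_entrywise {A : Matrix (Fin m) (Fin m) R} :
    0 ≤ A ↔ ∀ i j, 0 ≤ A i j :=
  Iff.rfl

lemma forall_nonneg_iff_stackCol (X : Fin n → Matrix (Fin m) (Fin m) R) :
    (∀ i, 0 ≤ X i) ↔ ∀ q j, 0 ≤ stackCol X q j := by
  simp only [Matrix.nonneg_iff_entrywise]
  refine ⟨fun hX q j => hX _ _ q, fun hX i r q => ?_⟩
  simpa only [stackCol_apply] using hX q (finProdFinEquiv (i, r))

lemma rowMul_matrix_apply (U X : Fin n → Matrix (Fin m) (Fin m) R) (p q : Fin m) :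
    rowMul (Matrix (Fin m) (Fin m) R) U X p q = rowMul R (stackRow U p) (stackCol X q) := by
  simp only [rowMul, rsmul]
  rw [Matrix.sum_apply, ← finProdFinEquiv.sum_comp, Fintype.sum_prod_type]
  simp only [Matrix.mul_apply, stackRow, stackCol, Equiv.symm_apply_apply]

theorem solutions_matrix_eq_setOf_stackCol (U : Fin n → Matrix (Fin m) (Fin m) R) :
    {X | 0 ≤ rowMul (Matrix (Fin m) (Fin m) R) U X ∧ ∀ i, 0 ≤ X i} =
      {X | ∀ q, stackCol X q ∈
        {ξ | (∀ p, 0 ≤ rowMul R (stackRow U p) ξ) ∧ ∀ j, 0 ≤ ξ j}} := by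
  ext X
  simp only [Set.mem_ofPred_eq, forall_nonneg_iff_stackCol]
  simp only [Matrix.nonneg_iff_entrywise, rowMul_matrix_apply, forall_and]
  rw [forall_comm]

lemma stackCol_rowMul_constStackCol {k : ℕ} (g : Fin k → Fin (n * m) → R)
    (Y : Fin k → Matrix (Fin m) (Fin m) R) (q : Fin m) :
    stackCol (rowMul (Matrix (Fin m) (Fin m) R) (fun t => constStackCol (g t)) Y) q =
      rowMul R g (fun t => ∑ u, Y t u q) := by
  funext j
  simp only [stackCol, rowMul_apply]
  simp only [rowMul, rsmul]
  rw [Matrix.sum_apply]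
  simp only [Matrix.mul_apply, constStackCol, Matrix.of_apply, Prod.mk.eta,
    Equiv.apply_symm_apply, Finset.mul_sum]

theorem setOf_forall_stackCol_mem_posSpan {k : ℕ} (g : Fin k → Fin (n * m) → R) :
    {X : Fin n → Matrix (Fin m) (Fin m) R | ∀ q, stackCol X q ∈ posSpan R g} =
      posSpan (Matrix (Fin m) (Fin m) R) (fun t => constStackCol (g t)) := by
  ext X
  constructor
  · intro hX
    choose Yc hYc hXc using hX
    -- Diagonal coefficients let each column of `X` use its own combination of the generators.
    refine ⟨fun t => Matrix.diagonal fun c => Yc c t,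
      fun t => Matrix.nonneg_iff_entrywise.2 fun u c => ?_, ?_⟩
    · beta_reduce
      rw [Matrix.diagonal_apply]
      split_ifs
      exacts [hYc u t, le_rfl]
    · refine stackCol_injective (funext fun q => ?_)
      simp [hXc q, stackCol_rowMul_constStackCol, Matrix.diagonal_apply]
  · rintro ⟨Y, hY, rfl⟩ q
    rw [stackCol_rowMul_constStackCol]
    exact ⟨_, fun t => PORing.sum_nonneg fun u _ => hY t u q, rfl⟩

end MatrixRing

theorem rightPoCoherent_matrixRing_general (R : Type*) [PORing R] (m : ℕ)
    (hR : RightPoCoherent R) :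
    RightPoCoherent (Matrix (Fin m) (Fin m) R) := by
  intro n U
  obtain ⟨k, g, hg⟩ := hR.isFGConeIn_solutions (stackRow U)
  refine ⟨k, fun t => constStackCol (g t), ?_⟩
  rw [solutions_matrix_eq_setOf_stackCol, hg]
  exact setOf_forall_stackCol_mem_posSpan g

/-- Let `R` be a right po-coherent po-ring and `m ≥ 1`.  Then the matrix
ring `M_m(R)`, ordered componentwise, is a right po-coherent po-ring. -/
theorem rightPoCoherent_matrixRing (R : Type*) [PORing R] (m : ℕ) (hm : 1 ≤ m)
    (hR : RightPoCoherent R) :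
    RightPoCoherent (Matrix (Fin m) (Fin m) R) :=
  rightPoCoherent_matrixRing_general R m hR
end

section
/- Let S be a po-ring and let R be a directed subring of S (with the induced order). Define D = {d ∈ R⁺ | for all x ∈ S, dx ≥ 0 implies x ≥ 0} and U = {u ∈ R⁺ | there exists v ∈ S⁺ with uv = 1}. Suppose that for every s ∈ S there exist d ∈ D and u ∈ U such that ds ∈ R and su ∈ R. If R is right po-coherent, then S is right po-coherent. -/
open PORightModule

/-- A directed subring of a po-ring, with the induced partial order, is itself a po-ring. -/
def Subring.toPORing {S : Type*} [PORing S] (R : Subring S)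
    (hdir : ∀ x : R, ∃ y z : R, 0 ≤ (y : S) ∧ 0 ≤ (z : S) ∧ x = y - z) :
    PORing R where
  __ := (inferInstance : Ring R)
  __ := (inferInstance : PartialOrder R)
  add_le_add_right' a b h c := by
    rw [← Subtype.coe_le_coe] at h ⊢
    push_cast
    exact PORing.add_le_add_right' _ _ h _
  mul_le_mul_of_nonneg_right' a b c h hc := by
    rw [← Subtype.coe_le_coe] at h hc ⊢
    push_cast at hc ⊢
    exact PORing.mul_le_mul_of_nonneg_right' _ _ _ h hc
  mul_le_mul_of_nonneg_left' a b c h hc := by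
    rw [← Subtype.coe_le_coe] at h hc ⊢
    push_cast at hc ⊢
    exact PORing.mul_le_mul_of_nonneg_left' _ _ _ h hc
  directed' x := by
    obtain ⟨y, z, hy, hz, hx⟩ := hdir x
    exact ⟨y, z, by rwa [← Subtype.coe_le_coe, ZeroMemClass.coe_zero],
      by rwa [← Subtype.coe_le_coe, ZeroMemClass.coe_zero], hx⟩
  zero_le_one' := by
    rw [← Subtype.coe_le_coe]
    push_cast
    exact PORing.zero_le_one'

/-!
Clear denominators on both sides. For a row `U` over `S`, some `d ∈ D` makes `dU` a row over `R`;
since left multiplication by `d` reflects positivity, `U` and `dU` have the same nonnegative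
solutions, so the `R⁺`-generators `g₁, …, gₖ` of the solutions of `dU` in `R` are solutions of `U`.
Conversely, a solution `X` in `S` is moved into `R` by some `u ∈ U`; then `Xu = ∑ gⱼ ζⱼ` with
`ζⱼ ∈ R⁺`, and `X = Xuv = ∑ gⱼ (ζⱼ v)` with `ζⱼ v ≥ 0`.
-/

instance PORing.toIsOrderedRing (S : Type*) [PORing S] : IsOrderedRing S where
  add_le_add_left := PORing.add_le_add_right'
  zero_le_one := PORing.zero_le_one'
  mul_le_mul_of_nonneg_left _ ha _ _ hbc := PORing.mul_le_mul_of_nonneg_left' _ _ _ hbc ha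
  mul_le_mul_of_nonneg_right _ ha _ _ hbc := PORing.mul_le_mul_of_nonneg_right' _ _ _ hbc ha

def posSolutions (R : Type*) [PORing R] {A : Type*} [AddCommGroup A] [PartialOrder A]
    [PORightModule R A] {n : ℕ} (U : Fin n → A) : Set (Fin n → R) :=
  {X | 0 ≤ rowMul R U X ∧ ∀ i, 0 ≤ X i}

section RowMul

variable {S : Type*} [PORing S] {n k : ℕ}

lemma rowMul_eq_sum (U X : Fin n → S) : rowMul S U X = ∑ i, U i * X i := rfl

lemma rowMul_apply_s11 (g : Fin k → Fin n → S) (Z : Fin k → S) (i : Fin n) :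
    rowMul S g Z i = ∑ j, g j i * Z j :=
  Finset.sum_apply i _ _

lemma rowMul_single (g : Fin k → Fin n → S) (j : Fin k) : rowMul S g (Pi.single j 1) = g j := by
  funext i
  simp [rowMul_apply_s11, Pi.single_apply]

lemma mul_rowMul (d : S) (U X : Fin n → S) :
    d * rowMul S U X = rowMul S (fun i => d * U i) X := by
  simp only [rowMul_eq_sum, Finset.mul_sum, mul_assoc]

lemma rowMul_mul (U X : Fin n → S) (u : S) :
    rowMul S U X * u = rowMul S U (fun i => X i * u) := by
  simp only [rowMul_eq_sum, Finset.sum_mul, mul_assoc]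

lemma rowMul_rowMul_s11 (U : Fin n → S) (g : Fin k → Fin n → S) (W : Fin k → S) :
    rowMul S U (rowMul S g W) = rowMul S (fun j => rowMul S U (g j)) W := by
  simp only [rowMul_eq_sum, rowMul_apply_s11, Finset.mul_sum, Finset.sum_mul, mul_assoc]
  exact Finset.sum_comm

lemma map_rowMul {R : Type*} [PORing R] (f : R →+* S) (V Y : Fin n → R) :
    f (rowMul R V Y) = rowMul S (fun i => f (V i)) (fun i => f (Y i)) := by
  simp only [rowMul_eq_sum, map_sum, map_mul]

lemma map_rowMul_apply {R : Type*} [PORing R] (f : R →+* S) (g : Fin k → Fin n → R)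
    (Z : Fin k → R) (i : Fin n) :
    f (rowMul R g Z i) = rowMul S (fun j i => f (g j i)) (fun j => f (Z j)) i := by
  simp only [rowMul_apply_s11, map_sum, map_mul]

end RowMul

section Cone

variable {S : Type*} [PORing S] {n k : ℕ}

lemma rowMul_mem_posSolutions {U : Fin n → S} {g : Fin k → Fin n → S}
    (hg : ∀ j, g j ∈ posSolutions S U) {W : Fin k → S} (hW : ∀ j, 0 ≤ W j) :
    rowMul S g W ∈ posSolutions S U := by
  refine ⟨?_, fun i => ?_⟩
  · rw [rowMul_rowMul_s11]
    exact Finset.sum_nonneg fun j _ => mul_nonneg (hg j).1 (hW j)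
  · rw [rowMul_apply_s11]
    exact Finset.sum_nonneg fun j _ => mul_nonneg ((hg j).2 i) (hW j)

lemma FinitelyRelatedAt.of_generators {U : Fin n → S} (g : Fin k → Fin n → S)
    (hg : ∀ j, g j ∈ posSolutions S U)
    (hspan : ∀ X ∈ posSolutions S U, ∃ W : Fin k → S, (∀ j, 0 ≤ W j) ∧ X = rowMul S g W) :
    FinitelyRelatedAt S U :=
  ⟨k, g, Set.Subset.antisymm hspan fun _ ⟨_, hW, hX⟩ => hX ▸ rowMul_mem_posSolutions hg hW⟩

lemma generator_mem_of_eq_span {C : Set (Fin n → S)} {g : Fin k → Fin n → S}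
    (hC : C = {X | ∃ W : Fin k → S, (∀ j, 0 ≤ W j) ∧ X = rowMul S g W}) (j : Fin k) :
    g j ∈ C := by
  rw [hC]
  exact ⟨Pi.single j 1, Pi.single_nonneg.2 zero_le_one, (rowMul_single g j).symm⟩

end Cone

section CommonMultiplier

variable {S ι : Type*} [Monoid S] [Fintype ι] {T M : Submonoid S}

lemma Submonoid.exists_forall_mul_mem_left (hMT : M ≤ T) (h : ∀ s, ∃ d ∈ M, d * s ∈ T)
    (U : ι → S) : ∃ d ∈ M, ∀ i, d * U i ∈ T := by
  suffices ∀ F : Finset ι, ∃ d ∈ M, ∀ i ∈ F, d * U i ∈ T by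
    simpa using this Finset.univ
  classical
  intro F
  induction F using Finset.induction_on with
  | empty => exact ⟨1, M.one_mem, by simp⟩
  | insert i F _ ih =>
    obtain ⟨d, hdM, hdF⟩ := ih
    obtain ⟨d', hd'M, hd'i⟩ := h (d * U i)
    refine ⟨d' * d, M.mul_mem hd'M hdM, (Finset.forall_mem_insert _ _ _).2 ⟨?_, fun i' hi' => ?_⟩⟩
    · rwa [mul_assoc]
    · rw [mul_assoc]
      exact T.mul_mem (hMT hd'M) (hdF i' hi')

lemma Submonoid.exists_forall_mul_mem_right (hMT : M ≤ T) (h : ∀ s, ∃ u ∈ M, s * u ∈ T)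
    (X : ι → S) : ∃ u ∈ M, ∀ i, X i * u ∈ T := by
  suffices ∀ F : Finset ι, ∃ u ∈ M, ∀ i ∈ F, X i * u ∈ T by
    simpa using this Finset.univ
  classical
  intro F
  induction F using Finset.induction_on with
  | empty => exact ⟨1, M.one_mem, by simp⟩
  | insert i F _ ih =>
    obtain ⟨u, huM, huF⟩ := ih
    obtain ⟨u', hu'M, hu'i⟩ := h (X i * u)
    refine ⟨u * u', M.mul_mem huM hu'M, (Finset.forall_mem_insert _ _ _).2 ⟨?_, fun i' hi' => ?_⟩⟩
    · rwa [← mul_assoc]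
    · rw [← mul_assoc]
      exact T.mul_mem (huF i' hi') (hMT hu'M)

end CommonMultiplier

section PositiveSubmonoids

-- The sets `D` and `U` of the statement are `leftPosReflecting S ⊓ R` and
-- `rightPosInvertible S ⊓ R`.

variable (S : Type*) [PORing S]

def leftPosReflecting : Submonoid S where
  carrier := {d | 0 ≤ d ∧ ∀ x, 0 ≤ d * x → 0 ≤ x}
  one_mem' := ⟨zero_le_one, fun x hx => by rwa [one_mul] at hx⟩
  mul_mem' := fun {a b} ⟨ha, ha'⟩ ⟨hb, hb'⟩ =>
    ⟨mul_nonneg ha hb, fun x hx => hb' x (ha' _ (by rwa [← mul_assoc]))⟩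

def rightPosInvertible : Submonoid S where
  carrier := {u | 0 ≤ u ∧ ∃ v, 0 ≤ v ∧ u * v = 1}
  one_mem' := ⟨zero_le_one, 1, zero_le_one, one_mul 1⟩
  mul_mem' := fun {a b} ⟨ha, v, hv, hav⟩ ⟨hb, w, hw, hbw⟩ =>
    ⟨mul_nonneg ha hb, w * v, mul_nonneg hw hv,
      by rw [mul_assoc, ← mul_assoc b, hbw, one_mul, hav]⟩

end PositiveSubmonoids

section Transfer

variable {R S : Type*} [PORing R] [PORing S] (f : R →+* S) {n : ℕ} {U : Fin n → S}
  {V : Fin n → R} {d : S}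

lemma map_mem_posSolutions (hf : ∀ a, 0 ≤ f a ↔ 0 ≤ a) (hV : ∀ i, f (V i) = d * U i)
    (hd : d ∈ leftPosReflecting S) {Y : Fin n → R} (hY : Y ∈ posSolutions R V) :
    (fun i => f (Y i)) ∈ posSolutions S U := by
  refine ⟨hd.2 _ ?_, fun i => (hf _).2 (hY.2 i)⟩
  rw [mul_rowMul, ← funext hV, ← map_rowMul]
  exact (hf _).2 hY.1

lemma exists_mem_posSolutions_map_eq_mul (hf : ∀ a, 0 ≤ f a ↔ 0 ≤ a)
    (hV : ∀ i, f (V i) = d * U i) (hd : 0 ≤ d)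
    {X : Fin n → S} (hX : X ∈ posSolutions S U) {u : S} (hu : 0 ≤ u)
    (hXu : ∀ i, X i * u ∈ f.range) :
    ∃ Y ∈ posSolutions R V, ∀ i, f (Y i) = X i * u := by
  choose Y hY using hXu
  refine ⟨Y, ⟨(hf _).1 ?_, fun i => (hf _).1 ?_⟩, hY⟩
  · rw [map_rowMul, funext hV, funext hY, ← rowMul_mul, ← mul_rowMul, mul_assoc]
    exact mul_nonneg hd (mul_nonneg hX.1 hu)
  · exact hY i ▸ mul_nonneg (hX.2 i) hu

theorem finitelyRelatedAt_of_ringHom (hf : ∀ a, 0 ≤ f a ↔ 0 ≤ a) (hR : RightPoCoherent R)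
    (U : Fin n → S) (hd : d ∈ leftPosReflecting S) (hdU : ∀ i, d * U i ∈ f.range)
    (hU : ∀ X : Fin n → S, ∃ u ∈ rightPosInvertible S, ∀ i, X i * u ∈ f.range) :
    FinitelyRelatedAt S U := by
  choose V hV using hdU
  obtain ⟨k, g, hg⟩ := hR n V
  refine .of_generators (fun j i => f (g j i))
    (fun j => map_mem_posSolutions f hf hV hd (generator_mem_of_eq_span hg j)) fun X hX => ?_
  obtain ⟨u, ⟨hu, v, hv, huv⟩, hXu⟩ := hU X
  obtain ⟨Y, hYsol, hY⟩ := exists_mem_posSolutions_map_eq_mul f hf hV hd.1 hX hu hXu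
  obtain ⟨Z, hZ, rfl⟩ := hg.subset hYsol
  refine ⟨fun j => f (Z j) * v, fun j => mul_nonneg ((hf _).2 (hZ j)) hv, funext fun i => ?_⟩
  calc X i = X i * u * v := by rw [mul_assoc, huv, mul_one]
    _ = rowMul S (fun j i => f (g j i)) (fun j => f (Z j)) i * v := by
      rw [← hY, map_rowMul_apply]
    _ = _ := by simp only [rowMul_apply_s11, Finset.sum_mul, mul_assoc]

theorem RightPoCoherent.of_ringHom (hf : ∀ a, 0 ≤ f a ↔ 0 ≤ a) (hR : RightPoCoherent R)
    (hD : ∀ s, ∃ d ∈ leftPosReflecting S ⊓ f.range.toSubmonoid, d * s ∈ f.range)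
    (hU : ∀ s, ∃ u ∈ rightPosInvertible S ⊓ f.range.toSubmonoid, s * u ∈ f.range) :
    RightPoCoherent S := fun n U => by
  obtain ⟨d, hd, hdU⟩ := Submonoid.exists_forall_mul_mem_left inf_le_right hD U
  refine finitelyRelatedAt_of_ringHom f hf hR U hd.1 hdU fun X => ?_
  obtain ⟨u, hu, hXu⟩ := Submonoid.exists_forall_mul_mem_right inf_le_right hU X
  exact ⟨u, hu.1, hXu⟩

end Transfer

/-- Let `S` be a po-ring and `R` a directed subring of `S` (with the induced
order).  Let `D = {d ∈ R⁺ | ∀ x ∈ S, dx ≥ 0 → x ≥ 0}` and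
`U = {u ∈ R⁺ | ∃ v ∈ S⁺, uv = 1}`.  Suppose that for every `s ∈ S` there exist `d ∈ D` and
`u ∈ U` with `ds ∈ R` and `su ∈ R`.  If `R` is right po-coherent, then `S` is right
po-coherent. -/
theorem rightPoCoherent_of_subring {S : Type*} [PORing S] (R : Subring S)
    (hdir : ∀ x : R, ∃ y z : R, 0 ≤ (y : S) ∧ 0 ≤ (z : S) ∧ x = y - z)
    (hDU : ∀ s : S, ∃ d ∈ R, ∃ u ∈ R,
      (0 ≤ d ∧ ∀ x : S, 0 ≤ d * x → 0 ≤ x) ∧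
      (0 ≤ u ∧ ∃ v : S, 0 ≤ v ∧ u * v = 1) ∧
      d * s ∈ R ∧ s * u ∈ R)
    (hR : @RightPoCoherent R (Subring.toPORing R hdir)) :
    RightPoCoherent S := by
  let _ : PORing R := Subring.toPORing R hdir
  have hrange : ∀ {s : S}, s ∈ R → s ∈ R.subtype.range := fun hs => ⟨⟨_, hs⟩, rfl⟩
  refine RightPoCoherent.of_ringHom R.subtype (fun _ => Iff.rfl) hR (fun s => ?_) (fun s => ?_)
  · obtain ⟨d, hdR, -, -, hd, -, hds, -⟩ := hDU s
    exact ⟨d, ⟨hd, hrange hdR⟩, hrange hds⟩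
  · obtain ⟨-, -, u, huR, -, hu, -, hsu⟩ := hDU s
    exact ⟨u, ⟨hu, hrange huR⟩, hrange hsu⟩
end

section
/- Let m, n ≥ 1 and let M be an m × n matrix with integer entries. Then there exist k ≥ 1 and a k × m matrix S with integer entries such that for every unperforated partially ordered abelian group G satisfying the interpolation property, the solution set {X ∈ M_{1,m}(G⁺) | XM ≥ 0} equals {YS | Y ∈ M_{1,k}(G⁺)}, where G⁺ = {x ∈ G | 0 ≤ x}, the products XM and YS are computed using the ℤ-module structure of G, and matrix inequalities are entrywise. -/
/-!
By Gordan's lemma (Dickson's lemma, `AddSubmonoid.fg_of_subtractive`) the monoid of solutions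
`u ∈ ℕ^(m+n)` of the slack system `∑ᵢ Mᵢⱼ uᵢ = u_{m+j}` is finitely generated; the generators,
restricted to their first `m` coordinates, are the rows of `S`. What has to be shown is that
every positive solution in `G` of a homogeneous integer system is a positive `G`-combination
`∑ₜ uₜ ⊗ cₜ` of solutions `uₜ` in `ℕ`.

For a single equation `∑ᵢ vᵢ xᵢ = 0` whose largest coefficient in absolute value is
`v_{i₀} = a > 0`, one has `a x_{i₀} ≤ a ∑_{vⱼ<0} xⱼ`, so `x_{i₀} ≤ ∑_{vⱼ<0} xⱼ` by unperforation,
and Riesz decomposition (a consequence of interpolation) writes `x_{i₀} = ∑ fⱼ` with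
`0 ≤ fⱼ ≤ xⱼ`. In the variables `xᵢ - fᵢ` and `fⱼ` the equation has the coefficients `vᵢ`
(`i ≠ i₀`) and `vⱼ + a ∈ [0, a)`, so one coefficient of absolute value `a` has disappeared, and
induction applies. Several equations are treated one at a time: after the first one, `x` is a
positive combination of the finitely many generators of its solution monoid, and the remaining
equations become equations in the coefficients.
-/

open Finset

section

variable {ι κ G : Type*}

section Combinations

variable [Fintype κ] [AddCommMonoid G]

def natComb (g : κ → ι → ℕ) : (κ → G) →+ (ι → G) where
  toFun c i := ∑ t, g t i • c t
  map_zero' := by ext; simp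
  map_add' c d := by ext; simp [sum_add_distrib]

theorem natComb_apply (g : κ → ι → ℕ) (c : κ → G) (i : ι) :
    natComb g c i = ∑ t, g t i • c t := rfl

variable (G) in
/-- The image of `U ⊗ G⁺` in `G^ι`. -/
def tensorCone [Preorder G] (U : AddSubmonoid (ι → ℕ)) : AddSubmonoid (ι → G) :=
  AddSubmonoid.closure {x | ∃ u ∈ U, ∃ c : G, 0 ≤ c ∧ x = fun i => u i • c}

variable [Preorder G]

theorem natComb_mem_tensorCone {U : AddSubmonoid (ι → ℕ)} {g : κ → ι → ℕ} (hg : ∀ t, g t ∈ U)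
    {c : κ → G} (hc : 0 ≤ c) : natComb g c ∈ tensorCone G U := by
  have : natComb g c = ∑ t, fun i => g t i • c t := by
    ext i
    simp [natComb_apply]
  rw [this]
  exact sum_mem fun t _ => AddSubmonoid.subset_closure ⟨g t, hg t, c t, hc t, rfl⟩

theorem mem_tensorCone_top [Fintype ι] {x : ι → G} (hx : 0 ≤ x) : x ∈ tensorCone G ⊤ := by
  classical
  have : natComb (fun t => Pi.single t 1) x = x := by
    ext i
    simp [natComb_apply, Pi.single_apply_smul]
  rw [← this]
  exact natComb_mem_tensorCone (fun _ => AddSubmonoid.mem_top _) hx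

theorem natComb_mem_tensorCone_of_mem {U : AddSubmonoid (κ → ℕ)}
    {V : AddSubmonoid (ι → ℕ)} {g : κ → ι → ℕ} (hg : ∀ u ∈ U, natComb g u ∈ V) {c : κ → G}
    (hc : c ∈ tensorCone G U) :
    natComb g c ∈ tensorCone G V := by
  suffices tensorCone G U ≤ (tensorCone G V).comap (natComb g) from this hc
  refine AddSubmonoid.closure_le.2 ?_
  rintro _ ⟨u, hu, d, hd, rfl⟩
  refine AddSubmonoid.subset_closure ⟨natComb g u, hg u hu, d, hd, ?_⟩
  ext i
  simp [natComb_apply, sum_smul, mul_smul]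

variable [IsOrderedAddMonoid G]

theorem natComb_nonneg (g : κ → ι → ℕ) {c : κ → G} (hc : 0 ≤ c) : 0 ≤ natComb g c :=
  fun _ => sum_nonneg fun t _ => nsmul_nonneg (hc t) _

theorem exists_nonneg_natComb_eq {U : AddSubmonoid (ι → ℕ)} {g : κ → ι → ℕ}
    (hU : AddSubmonoid.closure (Set.range g) = U) {x : ι → G} (hx : x ∈ tensorCone G U) :
    ∃ c, 0 ≤ c ∧ natComb g c = x := by
  induction hx using AddSubmonoid.closure_induction with
  | mem x hx =>
    obtain ⟨u, hu, d, hd, rfl⟩ := hx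
    rw [← hU, AddSubmonoid.mem_closure_range_iff_of_fintype] at hu
    obtain ⟨a, rfl⟩ := hu
    refine ⟨fun t => a t • d, fun t => nsmul_nonneg hd _, ?_⟩
    ext i
    simp [natComb_apply, sum_smul, mul_smul, mul_comm]
  | zero => exact ⟨0, le_rfl, map_zero _⟩
  | add x y _ _ hx hy =>
    obtain ⟨c, hc, rfl⟩ := hx
    obtain ⟨d, hd, rfl⟩ := hy
    exact ⟨c + d, add_nonneg hc hd, map_add _ _ _⟩

end Combinations

section Kernel

variable [Fintype ι]

def natKer (v : ι → ℤ) : AddSubmonoid (ι → ℕ) where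
  carrier := {u | ∑ i, v i * u i = 0}
  add_mem' hu hv := by simp_all [mul_add, sum_add_distrib]
  zero_mem' := by simp

theorem mem_natKer {v : ι → ℤ} {u : ι → ℕ} : u ∈ natKer v ↔ ∑ i, v i * u i = 0 := Iff.rfl

theorem natKer_zero : natKer (0 : ι → ℤ) = ⊤ := by
  ext u
  simp [mem_natKer]

theorem natKer_neg (v : ι → ℤ) : natKer (-v) = natKer v := by
  ext u
  simp [mem_natKer, sum_neg_distrib]

theorem fg_iInf_natKer (A : κ → ι → ℤ) : (⨅ k, natKer (A k)).FG :=
  AddSubmonoid.fg_of_subtractive fun u hu w huw => by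
    simp_all [AddSubmonoid.mem_iInf, mem_natKer, mul_add, sum_add_distrib]

variable [Fintype κ]

theorem sum_zsmul_natComb [AddCommGroup G] (v : ι → ℤ) (g : κ → ι → ℕ) (c : κ → G) :
    ∑ i, v i • natComb g c i = ∑ t, (∑ i, v i * g t i) • c t := by
  simp only [natComb_apply, smul_sum, sum_smul]
  rw [sum_comm]
  refine sum_congr rfl fun t _ => sum_congr rfl fun i _ => ?_
  rw [mul_smul, natCast_zsmul]

theorem sum_zsmul_natComb_eq_zero [AddCommGroup G] {v : ι → ℤ} {g : κ → ι → ℕ}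
    (hg : ∀ t, g t ∈ natKer v) (c : κ → G) : ∑ i, v i • natComb g c i = 0 := by
  simp [sum_zsmul_natComb, mem_natKer.1 (hg _)]

theorem natComb_mem_natKer {v : ι → ℤ} {g : κ → ι → ℕ} {u : κ → ℕ}
    (hu : u ∈ natKer fun t => ∑ i, v i * g t i) : natComb g u ∈ natKer v := by
  have := sum_zsmul_natComb v g fun t => (u t : ℤ)
  simp only [smul_eq_mul] at this
  rw [mem_natKer] at hu ⊢
  rw [← hu, ← this]
  simp [natComb_apply]

end Kernel

section Elimination

variable [Fintype ι] [DecidableEq ι]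

/-- The substitution `x_{i₀} = ∑_{vⱼ<0} fⱼ`, `xᵢ = (xᵢ - fᵢ) + fᵢ` as an `ℕ`-matrix: row `inl i`
says where the new variable `xᵢ - fᵢ` occurs, row `inr j` where `fⱼ` occurs. -/
def elimRows (v : ι → ℤ) (i₀ : ι) : ι ⊕ ι → ι → ℕ
  | .inl i => if i = i₀ then 0 else Pi.single i 1
  | .inr i => if v i < 0 then Pi.single i 1 + Pi.single i₀ 1 else 0

theorem sum_mul_elimRows (v : ι → ℤ) (i₀ : ι) :
    (fun k => ∑ i, v i * elimRows v i₀ k i) =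
      Sum.elim (fun i => if i = i₀ then 0 else v i)
        (fun i => if v i < 0 then v i + v i₀ else 0) := by
  ext (i | i)
  · by_cases h : i = i₀ <;> simp [elimRows, h, Pi.single_apply]
  · by_cases h : v i < 0 <;> simp [elimRows, h, Pi.single_apply, mul_add, sum_add_distrib]

theorem natComb_elimRows [AddCommGroup G] {v : ι → ℤ} {i₀ : ι} (h0 : 0 ≤ v i₀)
    {x f : ι → G} (hf : ∀ i, 0 ≤ v i → f i = 0) (hfx : ∑ i, f i = x i₀) :
    natComb (elimRows v i₀) (Sum.elim (x - f) f) = x := by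
  ext i
  have hl : ∀ t, elimRows v i₀ (.inl t) i = if i = i₀ then 0 else (Pi.single t 1 : ι → ℕ) i := by
    intro t
    simp only [elimRows]
    split_ifs <;> simp_all [Pi.single_apply]
  have hr : ∀ t, elimRows v i₀ (.inr t) i • f t
      = (Pi.single t 1 + Pi.single i₀ 1 : ι → ℕ) i • f t := fun t => by
    simp only [elimRows]
    split_ifs with ht
    · rfl
    · simp [hf t (not_lt.1 ht)]
  rw [natComb_apply, Fintype.sum_sum_type]
  simp only [Sum.elim_inl, Sum.elim_inr, hl, hr, Pi.add_apply, add_smul, sum_add_distrib]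
  rcases eq_or_ne i i₀ with rfl | hi
  · simp [Pi.single_apply_smul, hf i h0, hfx]
  · simp [hi, Pi.single_apply_smul]

theorem natAbs_sum_mul_elimRows_le {v : ι → ℤ} {i₀ : ι} (h0 : 0 < v i₀)
    (hmax : ∀ i, (v i).natAbs ≤ (v i₀).natAbs) (k : ι ⊕ ι) :
    (∑ i, v i * elimRows v i₀ k i).natAbs ≤ (v i₀).natAbs := by
  rw [congrFun (sum_mul_elimRows v i₀) k]
  rcases k with i | i <;> have := hmax i <;> simp only [Sum.elim_inl, Sum.elim_inr] <;>
    split_ifs <;> omega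

theorem card_natAbs_sum_mul_elimRows_lt {v : ι → ℤ} {i₀ : ι} (h0 : 0 < v i₀)
    (hmax : ∀ i, (v i).natAbs ≤ (v i₀).natAbs) :
    #{k | (∑ i, v i * elimRows v i₀ k i).natAbs = (v i₀).natAbs} <
      #{i | (v i).natAbs = (v i₀).natAbs} := by
  have hsub :
      ({k | (∑ i, v i * elimRows v i₀ k i).natAbs = (v i₀).natAbs} : Finset (ι ⊕ ι)) ⊆
        (({i | (v i).natAbs = (v i₀).natAbs} : Finset ι).erase i₀).map .inl := by
    rintro (i | i) hk <;> have := hmax i <;>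
      simp only [mem_filter, mem_univ, true_and, congrFun (sum_mul_elimRows v i₀) _,
        Sum.elim_inl, Sum.elim_inr] at hk
    · split_ifs at hk with h
      · omega
      · simp [h, hk]
    · split_ifs at hk <;> omega
  calc _ ≤ _ := card_le_card hsub
    _ < _ := by rw [card_map]; exact card_erase_lt_of_mem (by simp)

end Elimination

def HasInterpolation (G : Type*) [LE G] : Prop :=
  ∀ a₀ a₁ b₀ b₁ : G, a₀ ≤ b₀ → a₀ ≤ b₁ → a₁ ≤ b₀ → a₁ ≤ b₁ →
    ∃ x, a₀ ≤ x ∧ a₁ ≤ x ∧ x ≤ b₀ ∧ x ≤ b₁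

def IsUnperforated (G : Type*) [AddMonoid G] [LE G] : Prop :=
  ∀ (p : ℕ) (x : G), 1 ≤ p → 0 ≤ p • x → 0 ≤ x

section OrderedGroup

variable [AddCommGroup G] [PartialOrder G] [IsOrderedAddMonoid G]

namespace HasInterpolation

theorem exists_add_eq (hG : HasInterpolation G) {x y z : G} (hx : 0 ≤ x) (hy : 0 ≤ y)
    (hz : 0 ≤ z) (hzxy : z ≤ x + y) :
    ∃ u w, 0 ≤ u ∧ u ≤ x ∧ 0 ≤ w ∧ w ≤ y ∧ u + w = z := by
  obtain ⟨u, hu, hzu, huz, hux⟩ :=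
    hG 0 (z - y) z x hz hx (sub_le_self z hy) (sub_le_iff_le_add.2 hzxy)
  exact ⟨u, z - u, hu, hux, sub_nonneg.2 huz, sub_le_comm.1 hzu, add_sub_cancel u z⟩

theorem exists_sum_eq (hG : HasInterpolation G) (s : Finset ι) {x : ι → G} (hx : 0 ≤ x) {z : G}
    (hz : 0 ≤ z) (hzx : z ≤ ∑ i ∈ s, x i) : ∃ f, 0 ≤ f ∧ f ≤ x ∧ ∑ i ∈ s, f i = z := by
  classical
  induction s using Finset.induction_on generalizing z with
  | empty => exact ⟨0, le_rfl, hx, by simpa using (le_antisymm (by simpa using hzx) hz).symm⟩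
  | insert a s ha ih =>
    rw [sum_insert ha] at hzx
    obtain ⟨u, w, hu, hux, hw, hws, rfl⟩ :=
      hG.exists_add_eq (hx a) (sum_nonneg fun i _ => hx i) hz hzx
    obtain ⟨f, hf, hfx, rfl⟩ := ih hw hws
    refine ⟨Function.update f a u, ?_, ?_, ?_⟩
    · exact le_update_iff.2 ⟨hu, fun i _ => hf i⟩
    · exact update_le_iff.2 ⟨hux, fun i _ => hfx i⟩
    · rw [sum_insert ha, Function.update_self,
        sum_congr rfl fun i hi => Function.update_of_ne (ne_of_mem_of_not_mem hi ha) u f]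

end HasInterpolation

theorem IsUnperforated.le_sum_of_sum_zsmul_eq_zero [Fintype ι] (hG : IsUnperforated G)
    {v : ι → ℤ} {x : ι → G} (hx : 0 ≤ x) (hv : ∑ i, v i • x i = 0) {i₀ : ι} (h0 : 0 < v i₀)
    (hmax : ∀ i, (v i).natAbs ≤ (v i₀).natAbs) :
    x i₀ ≤ ∑ i, if v i < 0 then x i else 0 := by
  classical
  set w : ι → ℤ := fun i =>
    v i + (if v i < 0 then v i₀ else 0) - (if i = i₀ then v i₀ else 0)
  have hw : ∀ i, 0 ≤ w i := fun i => by
    have := hmax i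
    simp only [w]
    split_ifs <;> subst_vars <;> omega
  have hsum : ∑ i, w i • x i = v i₀ • ((∑ i, if v i < 0 then x i else 0) - x i₀) := by
    simp [w, add_smul, sub_smul, sum_add_distrib, sum_sub_distrib, ite_smul, hv, smul_sub,
      smul_sum, smul_ite]
  have hpos : 0 ≤ (v i₀).toNat • ((∑ i, if v i < 0 then x i else 0) - x i₀) := by
    rw [← natCast_zsmul, Int.toNat_of_nonneg h0.le, ← hsum]
    exact sum_nonneg fun i _ => zsmul_nonneg (hx i) (hw i)
  exact sub_nonneg.1 (hG _ _ (by omega) hpos)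

theorem mem_tensorCone_natKer_of_elimRows [Fintype ι] [DecidableEq ι] (hG : IsUnperforated G)
    (hI : HasInterpolation G) {v : ι → ℤ} {i₀ : ι} (h0 : 0 < v i₀)
    (hmax : ∀ i, (v i).natAbs ≤ (v i₀).natAbs) {x : ι → G} (hx : 0 ≤ x) (hv : ∑ i, v i • x i = 0)
    (ih : ∀ x' : ι ⊕ ι → G, 0 ≤ x' → ∑ k, (∑ i, v i * elimRows v i₀ k i) • x' k = 0 →
      x' ∈ tensorCone G (natKer fun k => ∑ i, v i * elimRows v i₀ k i)) :
    x ∈ tensorCone G (natKer v) := by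
  set y : ι → G := fun i => if v i < 0 then x i else 0
  have hy : 0 ≤ y := fun i => by
    simp only [y]
    split_ifs
    exacts [hx i, le_rfl]
  have hyx : y ≤ x := fun i => by
    simp only [y]
    split_ifs
    exacts [le_rfl, hx i]
  obtain ⟨f, hf, hfy, hfx⟩ :=
    hI.exists_sum_eq univ hy (hx i₀) (hG.le_sum_of_sum_zsmul_eq_zero hx hv h0 hmax)
  have hf0 : ∀ i, 0 ≤ v i → f i = 0 := fun i h =>
    le_antisymm ((hfy i).trans (by simp [y, not_lt.2 h])) (hf i)
  have hx' : 0 ≤ Sum.elim (x - f) f := by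
    rintro (i | i)
    exacts [sub_nonneg.2 ((hfy i).trans (hyx i)), hf i]
  have hxe := natComb_elimRows h0.le hf0 hfx
  rw [← hxe]
  refine natComb_mem_tensorCone_of_mem (fun u hu => natComb_mem_natKer hu) (ih _ hx' ?_)
  rw [← sum_zsmul_natComb, hxe, hv]

theorem mem_tensorCone_natKer_of_natAbs_le (hG : IsUnperforated G) (hI : HasInterpolation G)
    (a c : ℕ) [Fintype ι] {v : ι → ℤ}
    (hva : ∀ i, (v i).natAbs ≤ a) (hvc : #{i | (v i).natAbs = a} ≤ c) {x : ι → G}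
    (hx : 0 ≤ x) (hv : ∑ i, v i • x i = 0) : x ∈ tensorCone G (natKer v) := by
  classical
  induction a generalizing ι c with
  | zero =>
    obtain rfl : v = 0 := funext fun i => by simpa using hva i
    rw [natKer_zero]
    exact mem_tensorCone_top hx
  | succ a iha =>
    induction c generalizing ι with
    | zero =>
      refine iha _ (fun i => ?_) (card_le_univ _) hx hv
      have := filter_eq_empty_iff.1 (card_eq_zero.1 (Nat.le_zero.1 hvc)) (mem_univ i)
      have := hva i
      omega
    | succ c ihc =>
      by_cases hex : ∃ i₀, (v i₀).natAbs = a + 1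
      · obtain ⟨i₀, hi₀⟩ := hex
        have reduce : ∀ w : ι → ℤ, (∀ i, (w i).natAbs = (v i).natAbs) → 0 < w i₀ →
            ∑ i, w i • x i = 0 → x ∈ tensorCone G (natKer w) := by
          intro w hw hw0 hwx
          have hmax : ∀ i, (w i).natAbs ≤ (w i₀).natAbs := fun i => by
            rw [hw, hw, hi₀]; exact hva i
          refine mem_tensorCone_natKer_of_elimRows hG hI hw0 hmax hx hwx fun x' hx' hwx' =>
            ihc (fun k => ?_) ?_ hx' hwx'
          · simpa [hw, hi₀] using natAbs_sum_mul_elimRows_le hw0 hmax k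
          · have := card_natAbs_sum_mul_elimRows_lt hw0 hmax
            simp only [hw, hi₀] at this
            omega
        rcases lt_or_gt_of_ne (show v i₀ ≠ 0 by omega) with hneg | hpos
        · rw [← natKer_neg]
          exact reduce (-v) (by simp) (by simpa using hneg) (by simp [neg_smul, hv])
        · exact reduce v (fun _ => rfl) hpos hv
      · push Not at hex
        refine iha _ (fun i => ?_) (card_le_univ _) hx hv
        have := hex i
        have := hva i
        omega

theorem mem_tensorCone_natKer (hG : IsUnperforated G) (hI : HasInterpolation G)
    [Fintype ι] {v : ι → ℤ} {x : ι → G} (hx : 0 ≤ x) (hv : ∑ i, v i • x i = 0) : x ∈ tensorCone G (natKer v) :=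
  mem_tensorCone_natKer_of_natAbs_le hG hI _ _
    (fun i => le_sup (f := fun i => (v i).natAbs) (mem_univ i)) (card_le_univ _) hx hv

theorem mem_tensorCone_iInf_natKer (hG : IsUnperforated G) (hI : HasInterpolation G) (n : ℕ)
    [Fintype ι] (A : Fin n → ι → ℤ) {x : ι → G} (hx : 0 ≤ x)
    (hA : ∀ k, ∑ i, A k i • x i = 0) : x ∈ tensorCone G (⨅ k, natKer (A k)) := by
  classical
  induction n generalizing ι with
  | zero =>
    rw [iInf_of_empty]
    exact mem_tensorCone_top hx
  | succ n ih =>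
    have hfg : (natKer (A 0)).FG := by simpa using fg_iInf_natKer fun _ : Unit => A 0
    obtain ⟨S, hS, hSfin⟩ := (AddSubmonoid.fg_iff _).1 hfg
    have := hSfin.fintype
    have hgen : AddSubmonoid.closure (Set.range ((↑) : S → ι → ℕ)) = natKer (A 0) := by
      rwa [Subtype.range_coe]
    obtain ⟨c, hc, rfl⟩ := exists_nonneg_natComb_eq hgen (mem_tensorCone_natKer hG hI hx (hA 0))
    refine natComb_mem_tensorCone_of_mem (fun u hu => ?_)
      (ih (fun k t => ∑ i, A k.succ i * t.1 i) hc fun k => ?_)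
    · rw [AddSubmonoid.mem_iInf] at hu ⊢
      intro k
      cases k using Fin.cases with
      | zero =>
        rw [← hgen, AddSubmonoid.mem_closure_range_iff_of_fintype]
        exact ⟨u, by ext i; simp [natComb_apply, mul_comm]⟩
      | succ k => exact natComb_mem_natKer (hu k)
    · rw [← sum_zsmul_natComb]
      exact hA k.succ

end OrderedGroup

theorem AddSubmonoid.FG.exists_pos_fin_generating_family {M : Type*} [AddMonoid M]
    {P : AddSubmonoid M} (hP : P.FG) :
    ∃ k, 1 ≤ k ∧ ∃ g : Fin k → M, AddSubmonoid.closure (Set.range g) = P := by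
  obtain ⟨S, hS, hSfin⟩ := (AddSubmonoid.fg_iff P).1 hP
  obtain ⟨k, g, -, hg⟩ := (hSfin.insert 0).fin_param
  obtain ⟨t, -⟩ : (0 : M) ∈ Set.range g := hg ▸ Set.mem_insert _ _
  exact ⟨k, t.pos, g, by rw [hg, AddSubmonoid.closure_insert_zero, hS]⟩

def slackRow [DecidableEq κ] (M : Matrix ι κ ℤ) (j : κ) : ι ⊕ κ → ℤ :=
  Sum.elim (fun i => M i j) (-Pi.single j 1)

theorem sum_zsmul_slackRow [Fintype ι] [Fintype κ] [DecidableEq κ] [AddCommGroup G]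
    (M : Matrix ι κ ℤ) (j : κ) (X : ι → G) (y : κ → G) :
    ∑ p, slackRow M j p • Sum.elim X y p = ∑ i, M i j • X i - y j := by
  simp [slackRow, Fintype.sum_sum_type, Pi.single_apply, neg_smul, sub_eq_add_neg]

end

theorem exists_universal_generators_int_general
    (m n : ℕ) (M : Matrix (Fin m) (Fin n) ℤ) :
    ∃ (k : ℕ), 1 ≤ k ∧ ∃ S : Matrix (Fin k) (Fin m) ℤ,
      ∀ (G : Type*) [AddCommGroup G] [PartialOrder G],
        (∀ a b : G, a ≤ b → ∀ c : G, a + c ≤ b + c) →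
        (∀ (p : ℕ) (x : G), 1 ≤ p → 0 ≤ p • x → 0 ≤ x) →
        (∀ a₀ a₁ b₀ b₁ : G, a₀ ≤ b₀ → a₀ ≤ b₁ → a₁ ≤ b₀ → a₁ ≤ b₁ →
          ∃ x : G, a₀ ≤ x ∧ a₁ ≤ x ∧ x ≤ b₀ ∧ x ≤ b₁) →
        {X : Fin m → G | (∀ i, 0 ≤ X i) ∧ ∀ j, 0 ≤ ∑ i, M i j • X i}
          = {X : Fin m → G | ∃ Y : Fin k → G, (∀ i, 0 ≤ Y i) ∧
              X = fun j => ∑ i, S i j • Y i} := by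
  obtain ⟨k, hk, g, hg⟩ := (fg_iInf_natKer (slackRow M)).exists_pos_fin_generating_family
  refine ⟨k, hk, Matrix.of fun t i => (g t (.inl i) : ℤ), fun G _ _ hmono hG hI => ?_⟩
  have : IsOrderedAddMonoid G := { add_le_add_left := fun a b hab c => hmono a b hab c }
  have hgA : ∀ t j, g t ∈ natKer (slackRow M j) := fun t =>
    AddSubmonoid.mem_iInf.1 (hg ▸ AddSubmonoid.subset_closure (Set.mem_range_self t))
  ext X
  simp only [Set.mem_ofPred_eq, Matrix.of_apply, natCast_zsmul]
  constructor
  · rintro ⟨hX, hXM⟩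
    have hx : 0 ≤ Sum.elim X fun j => ∑ i, M i j • X i := by
      rintro (i | j)
      exacts [hX i, hXM j]
    obtain ⟨Y, hY, hYX⟩ := exists_nonneg_natComb_eq hg
      (mem_tensorCone_iInf_natKer hG hI n _ hx fun j => by rw [sum_zsmul_slackRow, sub_self])
    exact ⟨Y, hY, funext fun i => by simpa [natComb_apply] using (congrFun hYX (.inl i)).symm⟩
  · rintro ⟨Y, hY, rfl⟩
    have hx := natComb_nonneg g hY
    refine ⟨fun i => hx (.inl i), fun j => ?_⟩
    have hj := sum_zsmul_natComb_eq_zero (hgA · j) Y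
    rw [← Sum.elim_comp_inl_inr (natComb g Y), sum_zsmul_slackRow, sub_eq_zero] at hj
    simp only [Function.comp_apply] at hj
    have : 0 ≤ natComb g Y (.inr j) := hx _
    rw [← hj] at this
    simpa only [natComb_apply] using this

/-- Proposition 3.15-style, after Grillet, Effros, Handelman, and Shen.
Let `m, n ≥ 1` and let `M` be an `m × n` matrix with integer entries.  Then there exist
`k ≥ 1` and a `k × m` integer matrix `S` such that, for every partially ordered abelian group
`G` (the order being translation-invariant) which is unperforated and satisfies the
interpolation property, the solution set `{X ∈ M_{1,m}(G⁺) | XM ≥ 0}` is exactly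
`{YS | Y ∈ M_{1,k}(G⁺)}`, products being computed with the `ℤ`-module structure of `G` and
matrix inequalities entrywise. -/
theorem exists_universal_generators_int
    (m n : ℕ) (hm : 1 ≤ m) (hn : 1 ≤ n) (M : Matrix (Fin m) (Fin n) ℤ) :
    ∃ (k : ℕ), 1 ≤ k ∧ ∃ S : Matrix (Fin k) (Fin m) ℤ,
      ∀ (G : Type*) [AddCommGroup G] [PartialOrder G],
        (∀ a b : G, a ≤ b → ∀ c : G, a + c ≤ b + c) →
        (∀ (p : ℕ) (x : G), 1 ≤ p → 0 ≤ p • x → 0 ≤ x) →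
        (∀ a₀ a₁ b₀ b₁ : G, a₀ ≤ b₀ → a₀ ≤ b₁ → a₁ ≤ b₀ → a₁ ≤ b₁ →
          ∃ x : G, a₀ ≤ x ∧ a₁ ≤ x ∧ x ≤ b₀ ∧ x ≤ b₁) →
        {X : Fin m → G | (∀ i, 0 ≤ X i) ∧ ∀ j, 0 ≤ ∑ i, M i j • X i}
          = {X : Fin m → G | ∃ Y : Fin k → G, (∀ i, 0 ≤ Y i) ∧
              X = fun j => ∑ i, S i j • Y i} :=
  exists_universal_generators_int_general m n M
end

section
/- The ring ℤ of integers, with its natural ordering, is a po-coherent po-ring; concretely, for every n ≥ 1 and every (a₁,…,aₙ) ∈ ℤⁿ, the set {(ξ₁,…,ξₙ) ∈ ℤⁿ | a₁ξ₁ + ⋯ + aₙξₙ ≥ 0 and ξᵢ ≥ 0 for all i} is a finitely generated additive submonoid of ℤⁿ. -/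
/-!
Adding the slack variable `s = a₁ξ₁ + ⋯ + aₙξₙ` turns the inequality into an equation, and the
nonnegative solutions `(ξ, s) ∈ ℕⁿ × ℕ` of a linear equation form a submonoid that is closed
under differences. By Dickson's lemma such a submonoid of `ℕⁿ⁺¹` is generated by its finitely
many minimal nonzero elements; forgetting `s` maps it onto the solution set of the inequality.
-/

open Finset

theorem AddMonoidHom.eqLocusM_fg {M N : Type*} [AddCommMonoid M] [PartialOrder M]
    [WellQuasiOrderedLE M] [IsOrderedCancelAddMonoid M] [CanonicallyOrderedAdd M]
    [AddMonoid N] [IsLeftCancelAdd N] (f g : M →+ N) : (f.eqLocusM g).FG :=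
  AddSubmonoid.fg_of_subtractive fun x hx y hxy =>
    add_left_cancel (a := f x) <| by
      rw [← map_add, mem_eqLocusM.1 hxy, map_add, mem_eqLocusM.1 hx]

section SlackSolutions

variable {n : ℕ} (a : Fin n → ℤ)

def slackSolutions : AddSubmonoid ((Fin n → ℕ) × ℕ) :=
  AddMonoidHom.eqLocusM
    (AddMonoidHom.mk' (fun p => ∑ i, a i * (p.1 i : ℤ)) fun p q => by
      simp only [Prod.fst_add, Pi.add_apply, Nat.cast_add, mul_add, sum_add_distrib])
    ((Nat.castAddMonoidHom ℤ).comp (AddMonoidHom.snd _ _))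

theorem mem_slackSolutions {p : (Fin n → ℕ) × ℕ} :
    p ∈ slackSolutions a ↔ ∑ i, a i * (p.1 i : ℤ) = p.2 :=
  Iff.rfl

def castFstAddHom : (Fin n → ℕ) × ℕ →+ (Fin n → ℤ) :=
  ((Nat.castAddMonoidHom ℤ).compLeft (Fin n)).comp (AddMonoidHom.fst _ _)

theorem coe_map_slackSolutions :
    ((slackSolutions a).map castFstAddHom : Set (Fin n → ℤ)) =
      {ξ | 0 ≤ ∑ i, a i * ξ i ∧ ∀ i, 0 ≤ ξ i} := by
  ext ξ
  simp only [AddSubmonoid.coe_map, Set.mem_image, SetLike.mem_coe, mem_slackSolutions,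
    Set.mem_ofPred_eq]
  constructor
  · rintro ⟨p, hp, rfl⟩
    exact ⟨hp ▸ p.2.cast_nonneg, fun i => (p.1 i).cast_nonneg⟩
  · rintro ⟨hsum, hξ⟩
    refine ⟨(fun i => (ξ i).toNat, (∑ i, a i * ξ i).toNat), ?_, ?_⟩
    · simp only [Int.toNat_of_nonneg hsum, Int.toNat_of_nonneg (hξ _)]
    · funext i
      exact Int.toNat_of_nonneg (hξ i)

end SlackSolutions

theorem int_poCoherent_general (n : ℕ) (a : Fin n → ℤ) :
    ∃ P : AddSubmonoid (Fin n → ℤ), P.FG ∧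
      (P : Set (Fin n → ℤ)) = {ξ : Fin n → ℤ | 0 ≤ ∑ i, a i * ξ i ∧ ∀ i, 0 ≤ ξ i} :=
  ⟨(slackSolutions a).map castFstAddHom, (AddMonoidHom.eqLocusM_fg _ _).map _,
    coe_map_slackSolutions a⟩

/-- The ring `ℤ` of integers, with its natural ordering, is a po-coherent
po-ring: for every `n ≥ 1` and every `(a₁,…,aₙ) ∈ ℤⁿ`, the solution set
`{(ξ₁,…,ξₙ) ∈ ℤⁿ | a₁ξ₁ + ⋯ + aₙξₙ ≥ 0 and ξᵢ ≥ 0 for all i}` is a finitely generated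
additive submonoid of `ℤⁿ`. -/
theorem int_poCoherent (n : ℕ) (hn : 1 ≤ n) (a : Fin n → ℤ) :
    ∃ P : AddSubmonoid (Fin n → ℤ), P.FG ∧
      (P : Set (Fin n → ℤ)) = {ξ : Fin n → ℤ | 0 ≤ ∑ i, a i * ξ i ∧ ∀ i, 0 ≤ ξ i} :=
  int_poCoherent_general n a
end

section
/- Every subring R of ℚ, with the order induced from ℚ, is a po-coherent po-ring: for every n ≥ 1 and every (a₁,…,aₙ) ∈ Rⁿ, the set {(ξ₁,…,ξₙ) ∈ Rⁿ | a₁ξ₁ + ⋯ + aₙξₙ ≥ 0 and ξᵢ ≥ 0 for all i} is a finitely generated R⁺-subsemimodule of Rⁿ. -/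
/-!
Let `d` be the product of the denominators of the entries of a solution `ξ`. Bézout for
`num, den` puts `1/den`, hence `1/d`, in `R`, and `d • ξ ∈ ℕⁿ` satisfies `b · (d • ξ) ≥ 0`,
where `b ∈ ℤⁿ` is `a` times the product of its own denominators. By Gordan's lemma the monoid
`{x ∈ ℕⁿ | b · x ≥ 0}` has finitely many generators `G l`, so `d • ξ = ∑ c l • G l` with
`c l ∈ ℕ`, and `ξ = ∑ (c l / d) • G l` is an `R⁺`-combination of them.
-/

open Finset

/-- Gordan's lemma for one inequality: `{x | 0 ≤ φ x}` is the projection of the equaliser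
`{(x, s) | φ x = s}` in `M × ℕ`, which is finitely generated by Dickson's lemma. -/
theorem AddSubmonoid.fg_comap_nonneg {M : Type*} [AddCommMonoid M] [PartialOrder M]
    [WellQuasiOrderedLE M] [IsOrderedCancelAddMonoid M] [CanonicallyOrderedAdd M] (φ : M →+ ℤ) :
    ((AddSubmonoid.nonneg ℤ).comap φ).FG := by
  convert (AddSubmonoid.fg_eqLocusM (φ.comp (AddMonoidHom.fst M ℕ))
    ((Nat.castAddMonoidHom ℤ).comp (AddMonoidHom.snd M ℕ))).map (AddMonoidHom.fst M ℕ)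
  ext x
  simp only [AddSubmonoid.mem_comap, AddSubmonoid.mem_nonneg, AddSubmonoid.mem_map,
    AddMonoidHom.mem_eqLocusM, AddMonoidHom.coe_comp, AddMonoidHom.coe_fst, Function.comp_apply,
    Nat.coe_castAddMonoidHom, AddMonoidHom.coe_snd, Prod.exists, exists_and_right, exists_eq_right]
  exact ⟨fun h => ⟨_, (Int.toNat_of_nonneg h).symm⟩, fun ⟨s, hs⟩ => hs ▸ s.cast_nonneg⟩

theorem AddSubmonoid.FG.exists_fin_closure_range {M : Type*} [AddMonoid M] {P : AddSubmonoid M}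
    (h : P.FG) : ∃ (k : ℕ) (G : Fin k → M), AddSubmonoid.closure (Set.range G) = P := by
  obtain ⟨S, rfl⟩ := h
  refine ⟨_, (↑) ∘ S.equivFin.symm, ?_⟩
  rw [Set.range_comp, S.equivFin.symm.range_eq_univ, Set.image_univ, Subtype.range_coe]

theorem Rat.exists_intCast_eq_mul_of_den_dvd {q : ℚ} {d : ℕ} (h : q.den ∣ d) :
    ∃ z : ℤ, (z : ℚ) = d * q := by
  obtain ⟨t, rfl⟩ := h
  exact ⟨q.num * t, by push_cast; rw [mul_right_comm, den_mul_eq_num, mul_comm]⟩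

theorem exists_fin_closure_range_iff_nonneg {ι : Type*} [Fintype ι] (a : ι → ℚ) :
    ∃ (k : ℕ) (G : Fin k → ι → ℕ), ∀ x : ι → ℕ,
      x ∈ AddSubmonoid.closure (Set.range G) ↔ 0 ≤ ∑ i, a i * x i := by
  choose b hb using fun i =>
    Rat.exists_intCast_eq_mul_of_den_dvd (dvd_prod_of_mem (fun j => (a j).den) (mem_univ i))
  set D := ∏ i, (a i).den
  let φ : (ι → ℕ) →+ ℤ :=
    { toFun x := ∑ i, b i * x i
      map_zero' := by simp
      map_add' x y := by simp [mul_add, sum_add_distrib] }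
  obtain ⟨k, G, hG⟩ := (AddSubmonoid.fg_comap_nonneg φ).exists_fin_closure_range
  refine ⟨k, G, fun x => ?_⟩
  have hφ : (φ x : ℚ) = D * ∑ i, a i * x i := by simp [φ, hb, mul_sum, mul_assoc]
  have hD : (0 : ℚ) < D := by positivity
  rw [hG, AddSubmonoid.mem_comap, AddSubmonoid.mem_nonneg,
    ← Int.cast_nonneg_iff (R := ℚ), hφ, mul_nonneg_iff_of_pos_left hD]

theorem sum_mul_sum_mul_nonneg {ι κ : Type*} [Fintype ι] [Fintype κ] {a : ι → ℚ}
    {G : κ → ι → ℚ} (hG : ∀ l, 0 ≤ ∑ i, a i * G l i) {Y : κ → ℚ} (hY : ∀ l, 0 ≤ Y l) :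
    0 ≤ ∑ i, a i * ∑ l, G l i * Y l :=
  calc 0 ≤ ∑ l, Y l * ∑ i, a i * G l i := sum_nonneg fun l _ => mul_nonneg (hY l) (hG l)
    _ = ∑ i, a i * ∑ l, G l i * Y l := by
      simp only [mul_sum]
      rw [sum_comm]
      exact sum_congr rfl fun _ _ => sum_congr rfl fun _ _ => by ring

namespace Subring

variable (R : Subring ℚ)

theorem inv_den_mem {q : ℚ} (hq : q ∈ R) : (q.den : ℚ)⁻¹ ∈ R := by
  obtain ⟨u, v, huv⟩ := Rat.isCoprime_num_den q
  have : (u * q + v) * q.den = 1 := by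
    rw [add_mul, mul_assoc, Rat.mul_den_eq_num]; exact_mod_cast huv
  rw [inv_eq_of_mul_eq_one_left this]
  exact add_mem (mul_mem (intCast_mem R u) hq) (intCast_mem R v)

theorem exists_natCast_eq_mul_of_nonneg {ι : Type*} [Fintype ι] {ξ : ι → ℚ}
    (hR : ∀ i, ξ i ∈ R) (h0 : ∀ i, 0 ≤ ξ i) :
    ∃ d : ℕ, 0 < d ∧ (d : ℚ)⁻¹ ∈ R ∧ ∃ x : ι → ℕ, ∀ i, (x i : ℚ) = d * ξ i := by
  refine ⟨∏ i, (ξ i).den, by positivity, ?_, ?_⟩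
  · rw [Nat.cast_prod, ← prod_inv_distrib]
    exact prod_mem fun i _ => R.inv_den_mem (hR i)
  · choose z hz using fun i =>
      Rat.exists_intCast_eq_mul_of_den_dvd (dvd_prod_of_mem (fun j => (ξ j).den) (mem_univ i))
    have hz0 : ∀ i, 0 ≤ z i := fun i => by
      exact_mod_cast (hz i).symm ▸ mul_nonneg (Nat.cast_nonneg _) (h0 i)
    exact ⟨fun i => (z i).toNat, fun i => by rw [← hz i, ← Int.toNat_of_nonneg (hz0 i)]; rfl⟩

theorem exists_eq_sum_generators {ι κ : Type*} [Fintype ι] [Fintype κ]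
    {a : ι → ℚ} {G : κ → ι → ℕ}
    (hG : ∀ x : ι → ℕ, 0 ≤ ∑ i, a i * x i → x ∈ AddSubmonoid.closure (Set.range G))
    {ξ : ι → ℚ} (hR : ∀ i, ξ i ∈ R) (h0 : ∀ i, 0 ≤ ξ i) (ha : 0 ≤ ∑ i, a i * ξ i) :
    ∃ Y : κ → ℚ, (∀ l, Y l ∈ R ∧ 0 ≤ Y l) ∧ ∀ j, ξ j = ∑ l, (G l j : ℚ) * Y l := by
  obtain ⟨d, hd, hdR, x, hx⟩ := R.exists_natCast_eq_mul_of_nonneg hR h0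
  have hxa : 0 ≤ ∑ i, a i * x i := by
    simp only [hx, mul_left_comm _ (d : ℚ), ← mul_sum]
    exact mul_nonneg d.cast_nonneg ha
  obtain ⟨c, rfl⟩ := AddSubmonoid.exists_of_mem_closure_range _ _ (hG x hxa)
  refine ⟨fun l => c l * (d : ℚ)⁻¹, fun l => ⟨mul_mem (natCast_mem R _) hdR, by positivity⟩,
    fun j => ?_⟩
  have hd0 : (d : ℚ) ≠ 0 := by exact_mod_cast hd.ne'
  calc ξ j = (d : ℚ)⁻¹ * (d * ξ j) := by field_simp
    _ = _ := by
      rw [← hx j]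
      simp only [nsmul_eq_mul, Finset.sum_apply, Pi.mul_apply, Pi.natCast_apply, Nat.cast_id,
        Nat.cast_sum, Nat.cast_mul, mul_sum]
      exact sum_congr rfl fun _ _ => by ring

end Subring

theorem subring_rat_poCoherent_general (R : Subring ℚ) (n : ℕ) (a : Fin n → R) :
    ∃ (k : ℕ) (g : Fin k → Fin n → R),
      {ξ : Fin n → R | 0 ≤ ((∑ i, a i * ξ i : R) : ℚ) ∧ ∀ i, 0 ≤ (ξ i : ℚ)}
        = {ξ : Fin n → R | ∃ Y : Fin k → R, (∀ i, 0 ≤ (Y i : ℚ)) ∧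
            ξ = fun j => ∑ i, g i j * Y i} := by
  obtain ⟨k, G, hG⟩ := exists_fin_closure_range_iff_nonneg fun i => (a i : ℚ)
  refine ⟨k, fun l j => G l j, Set.ext fun ξ => ?_⟩
  simp only [Set.mem_ofPred_eq, funext_iff, Subtype.ext_iff, AddSubmonoidClass.coe_finsetSum,
    Subring.coe_mul, SubringClass.coe_natCast]
  constructor
  · rintro ⟨ha, h0⟩
    obtain ⟨Y, hY, hξ⟩ := R.exists_eq_sum_generators (fun x => (hG x).2) (fun i => (ξ i).2) h0 ha
    exact ⟨fun l => ⟨Y l, (hY l).1⟩, fun l => (hY l).2, hξ⟩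
  · rintro ⟨Y, hY, hξ⟩
    simp only [hξ]
    have hGa : ∀ l, 0 ≤ ∑ i, (a i : ℚ) * G l i := fun l =>
      (hG (G l)).1 (AddSubmonoid.subset_closure ⟨l, rfl⟩)
    exact ⟨sum_mul_sum_mul_nonneg hGa hY,
      fun i => sum_nonneg fun l _ => mul_nonneg (Nat.cast_nonneg _) (hY l)⟩

/-- Every subring `R` of `ℚ`, with the order induced from `ℚ`, is a
po-coherent po-ring: for every `n ≥ 1` and every `(a₁,…,aₙ) ∈ Rⁿ`, the solution set
`{(ξ₁,…,ξₙ) ∈ Rⁿ | a₁ξ₁ + ⋯ + aₙξₙ ≥ 0 and ξᵢ ≥ 0 for all i}` is a finitely generated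
`R⁺`-subsemimodule of `Rⁿ`, i.e. the set of all `R⁺`-linear combinations of some finite
subset of `Rⁿ`. -/
theorem subring_rat_poCoherent (R : Subring ℚ) (n : ℕ) (hn : 1 ≤ n) (a : Fin n → R) :
    ∃ (k : ℕ) (g : Fin k → Fin n → R),
      {ξ : Fin n → R | 0 ≤ ((∑ i, a i * ξ i : R) : ℚ) ∧ ∀ i, 0 ≤ (ξ i : ℚ)}
        = {ξ : Fin n → R | ∃ Y : Fin k → R, (∀ i, 0 ≤ (Y i : ℚ)) ∧
            ξ = fun j => ∑ i, g i j * Y i} :=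
  subring_rat_poCoherent_general R n a
end

section
/- Every totally ordered division ring K is a po-coherent po-ring: for every n ≥ 1 and every (a₁,…,aₙ) ∈ Kⁿ, the set {(ξ₁,…,ξₙ) ∈ Kⁿ | a₁ξ₁ + ⋯ + aₙξₙ ≥ 0 and ξᵢ ≥ 0 for all i} is a finitely generated K⁺-subsemimodule of Kⁿ, where K⁺ = {ξ ∈ K | 0 ≤ ξ}. -/
set_option maxHeartbeats 2000000 in
/-- Every totally ordered division ring `K` (a division ring with a linear
order such that addition is translation-invariant and products of nonnegative elements are
nonnegative) is a po-coherent po-ring: for every `n ≥ 1` and every `(a₁,…,aₙ) ∈ Kⁿ`, the set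
`{(ξ₁,…,ξₙ) ∈ Kⁿ | a₁ξ₁ + ⋯ + aₙξₙ ≥ 0 and ξᵢ ≥ 0 for all i}` is a finitely generated
`K⁺`-subsemimodule of `Kⁿ`, i.e. the set of all `K⁺`-linear combinations of some finite
subset of `Kⁿ`. -/
theorem totallyOrderedDivisionRing_poCoherent
    (K : Type*) [DivisionRing K] [LinearOrder K]
    (hadd : ∀ a b : K, a ≤ b → ∀ c : K, a + c ≤ b + c)
    (hmul : ∀ a b : K, 0 ≤ a → 0 ≤ b → 0 ≤ a * b)
    (n : ℕ) (hn : 1 ≤ n) (a : Fin n → K) :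
    ∃ (k : ℕ) (g : Fin k → Fin n → K),
      {ξ : Fin n → K | 0 ≤ ∑ i, a i * ξ i ∧ ∀ i, 0 ≤ ξ i}
        = {ξ : Fin n → K | ∃ Y : Fin k → K, (∀ i, 0 ≤ Y i) ∧
            ξ = fun j => ∑ i, g i j * Y i} := by
  classical
  -- basic order facts
  have hneg : ∀ x : K, x ≤ 0 → 0 ≤ -x := by
    intro x hx
    have := hadd x 0 hx (-x)
    simpa using this
  have hone : (0:K) ≤ 1 := by
    rcases le_total (0:K) 1 with h | h
    · exact h
    · have h1 := hneg 1 h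
      have := hmul _ _ h1 h1
      simpa using this
  have hinv : ∀ x : K, 0 < x → 0 ≤ x⁻¹ := by
    intro x hx
    rcases le_total 0 x⁻¹ with h | h
    · exact h
    · have h2 := hmul _ _ hx.le (hneg _ h)
      rw [mul_neg, mul_inv_cancel₀ hx.ne'] at h2
      have h3 : (1:K) ≤ 0 := by
        have := hadd 0 (-1) h2 1
        simpa using this
      exact (one_ne_zero (le_antisymm h3 hone)).elim
  have hinv' : ∀ x : K, 0 ≤ x → 0 ≤ x⁻¹ := by
    intro x hx
    rcases hx.lt_or_eq with h | h
    · exact hinv _ h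
    · simp [← h]
  have haddnn : ∀ x y : K, 0 ≤ x → 0 ≤ y → 0 ≤ x + y := by
    intro x y hx hy
    have := hadd 0 x hx y
    rw [zero_add] at this
    exact le_trans hy this
  have hsumnn : ∀ (s : Finset (Fin n)) (f : Fin n → K),
      (∀ i ∈ s, 0 ≤ f i) → 0 ≤ ∑ i ∈ s, f i := by
    intro s f hf
    exact Finset.sum_induction f (fun x => 0 ≤ x) (fun _ _ => haddnn _ _) le_rfl hf
  have hsumzero : ∀ (f : Fin n → K),
      (∀ i ∈ Finset.univ, 0 ≤ f i) → ∑ i, f i = 0 → ∀ i, f i = 0 := by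
    intro f hf hs i
    have h1 : 0 ≤ ∑ j ∈ Finset.univ.erase i, f j :=
      hsumnn _ _ (fun j hj => hf j (Finset.mem_of_mem_erase hj))
    have h2 : f i ≤ ∑ j, f j := by
      have h3 := hadd 0 _ h1 (f i)
      rw [zero_add] at h3
      calc f i ≤ (∑ j ∈ Finset.univ.erase i, f j) + f i := h3
        _ = ∑ j, f j := Finset.sum_erase_add _ f (Finset.mem_univ i)
    exact le_antisymm (hs ▸ h2) (hf i (Finset.mem_univ i))
  -- the generators
  set G : (Fin n) ⊕ (Fin n × Fin n) → Fin n → K :=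
    Sum.elim
      (fun p j => if 0 ≤ a p then (if j = p then (1:K) else 0) else 0)
      (fun pq j => if 0 < a pq.1 ∧ a pq.2 < 0 then
          (if j = pq.2 then (1:K) else if j = pq.1 then (a pq.1)⁻¹ * (-(a pq.2)) else 0)
        else 0) with hG
  let eI : Fin (n + n * n) ≃ (Fin n) ⊕ (Fin n × Fin n) :=
    finSumFinEquiv.symm.trans (Equiv.sumCongr (Equiv.refl _) finProdFinEquiv.symm)
  refine ⟨n + n * n, fun i => G (eI i), ?_⟩
  ext ξ
  simp only [Set.mem_setOf_eq]
  constructor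
  · rintro ⟨hS, hξ⟩
    set sp := ∑ p, (if 0 < a p then a p * ξ p else 0) with hsp
    set sm := ∑ q, (if a q < 0 then (-(a q)) * ξ q else 0) with hsm
    have hsplit : ∑ i, a i * ξ i = sp - sm := by
      rw [hsp, hsm, ← Finset.sum_sub_distrib]
      refine Finset.sum_congr rfl (fun i _ => ?_)
      rcases lt_trichotomy (a i) 0 with h | h | h
      · simp [h, not_lt.mpr h.le, neg_mul]
      · simp [h]
      · simp [h, not_lt.mpr h.le]
    have hSP : 0 ≤ sp := by
      refine hsumnn _ _ (fun p _ => ?_)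
      split_ifs with h
      · exact hmul _ _ h.le (hξ p)
      · exact le_rfl
    have hSM : 0 ≤ sm := by
      refine hsumnn _ _ (fun q _ => ?_)
      split_ifs with h
      · exact hmul _ _ (hneg _ h.le) (hξ q)
      · exact le_rfl
    have hSpm : sm ≤ sp := by
      rw [hsplit] at hS
      have := hadd 0 (sp - sm) hS sm
      simpa using this
    have hS0 : 0 ≤ sp - sm := by
      have := hadd sm sp hSpm (-sm)
      simpa [sub_eq_add_neg] using this
    have hspinv : 0 ≤ sp⁻¹ := hinv' _ hSP
    -- if sp = 0, everything relevant vanishes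
    have hzero : sp = 0 → ∀ j, a j ≠ 0 → ξ j = 0 := by
      intro h0 j hj
      have hsm0 : sm = 0 := by
        rw [h0] at hSpm
        exact le_antisymm hSpm hSM
      rcases hj.lt_or_gt with h | h
      · have h1 := hsumzero _ (fun q _ => by
          split_ifs with hq
          · exact hmul _ _ (hneg _ hq.le) (hξ q)
          · exact le_rfl) (hsm.symm.trans hsm0) j
        rw [if_pos h] at h1
        rcases mul_eq_zero.mp h1 with h2 | h2
        · exact absurd h2 (neg_ne_zero.mpr hj)
        · exact h2
      · have h1 := hsumzero _ (fun p _ => by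
          split_ifs with hp
          · exact hmul _ _ hp.le (hξ p)
          · exact le_rfl) (hsp.symm.trans h0) j
        rw [if_pos h] at h1
        rcases mul_eq_zero.mp h1 with h2 | h2
        · exact absurd h2 hj
        · exact h2
    set Y' : (Fin n) ⊕ (Fin n × Fin n) → K :=
      Sum.elim
        (fun p => if 0 < a p then ξ p * (sp⁻¹ * (sp - sm)) else if 0 ≤ a p then ξ p else 0)
        (fun pq => if 0 < a pq.1 ∧ a pq.2 < 0 then
            (-(a pq.2))⁻¹ * ((a pq.1 * ξ pq.1) * (sp⁻¹ * ((-(a pq.2)) * ξ pq.2)))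
          else 0) with hY
    have hYnn : ∀ w, 0 ≤ Y' w := by
      intro w
      obtain p | pq := w
      · simp only [hY, Sum.elim_inl]
        split_ifs with h1 h2
        · exact hmul _ _ (hξ p) (hmul _ _ hspinv hS0)
        · exact hξ p
        · exact le_rfl
      · simp only [hY, Sum.elim_inr]
        split_ifs with h1
        · exact hmul _ _ (hinv' _ (hneg _ h1.2.le))
            (hmul _ _ (hmul _ _ h1.1.le (hξ pq.1))
              (hmul _ _ hspinv (hmul _ _ (hneg _ h1.2.le) (hξ pq.2))))
        · exact le_rfl
    refine ⟨fun i => Y' (eI i), fun i => hYnn (eI i), ?_⟩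
    · -- the decomposition identity
      funext j
      have htransport : ∑ i, G (eI i) j * Y' (eI i) = ∑ w, G w j * Y' w :=
        Fintype.sum_equiv eI (fun i => G (eI i) j * Y' (eI i)) (fun w => G w j * Y' w)
          (fun i => rfl)
      rw [htransport, Fintype.sum_sum_type]
      have hA : ∑ p, G (Sum.inl p) j * Y' (Sum.inl p)
          = if 0 ≤ a j then Y' (Sum.inl j) else 0 := by
        rw [Finset.sum_eq_single j]
        · simp only [hG, Sum.elim_inl]
          by_cases h : 0 ≤ a j
          · rw [if_pos h, if_pos h, if_pos trivial, one_mul]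
          · rw [if_neg h, if_neg h, zero_mul]
        · intro p _ hp
          simp only [hG, Sum.elim_inl]
          by_cases h : 0 ≤ a p
          · rw [if_pos h, if_neg (Ne.symm hp), zero_mul]
          · rw [if_neg h, zero_mul]
        · intro h
          exact absurd (Finset.mem_univ j) h
      rw [hA]
      rcases lt_or_ge (a j) 0 with hj | hj
      · -- negative coordinate: comes entirely from the pair generators
        rw [if_neg (not_le.mpr hj), Fintype.sum_prod_type]
        have hB : ∀ p, ∑ q, G (Sum.inr (p, q)) j * Y' (Sum.inr (p, q))
            = (-(a j))⁻¹ * ((if 0 < a p then a p * ξ p else 0)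
                * (sp⁻¹ * ((-(a j)) * ξ j))) := by
          intro p
          rw [Finset.sum_eq_single j]
          · simp only [hG, hY, Sum.elim_inr]
            by_cases hp : 0 < a p
            · rw [if_pos (show 0 < a p ∧ a j < 0 from ⟨hp, hj⟩),
                if_pos (show 0 < a p ∧ a j < 0 from ⟨hp, hj⟩),
                if_pos trivial, one_mul, if_pos hp]
            · rw [if_neg (show ¬(0 < a p ∧ a j < 0) from fun h => hp h.1),
                if_neg (show ¬(0 < a p ∧ a j < 0) from fun h => hp h.1),
                if_neg hp, zero_mul, zero_mul, mul_zero]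
          · intro q _ hq
            simp only [hG, hY, Sum.elim_inr]
            by_cases hc : 0 < a p ∧ a q < 0
            · have hjp : j ≠ p := by
                rintro rfl
                exact absurd hc.1 (not_lt.mpr hj.le)
              rw [if_pos hc, if_pos hc, if_neg (Ne.symm hq), if_neg hjp, zero_mul]
            · rw [if_neg hc, if_neg hc, zero_mul]
          · intro h
            exact absurd (Finset.mem_univ j) h
        rw [Finset.sum_congr rfl (fun p _ => hB p), ← Finset.mul_sum, ← Finset.sum_mul,
          ← hsp, zero_add]
        rcases eq_or_ne sp 0 with h0 | h0
        · rw [hzero h0 j hj.ne, h0, zero_mul, mul_zero]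
        · rw [← mul_assoc sp, mul_inv_cancel₀ h0, one_mul, ← mul_assoc,
            inv_mul_cancel₀ (neg_ne_zero.mpr hj.ne), one_mul]
      · -- nonnegative coordinate
        rw [if_pos hj, Fintype.sum_prod_type, Finset.sum_comm]
        have hB : ∀ q, ∑ p, G (Sum.inr (p, q)) j * Y' (Sum.inr (p, q))
            = if 0 < a j then
                (a j)⁻¹ * ((a j * ξ j) * (sp⁻¹ * (if a q < 0 then (-(a q)) * ξ q else 0)))
              else 0 := by
          intro q
          rw [Finset.sum_eq_single j]
          · simp only [hG, hY, Sum.elim_inr]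
            by_cases hj0 : 0 < a j
            · by_cases hq : a q < 0
              · have hjq : j ≠ q := by
                  rintro rfl
                  exact absurd hq (not_lt.mpr hj)
                rw [if_pos (show 0 < a j ∧ a q < 0 from ⟨hj0, hq⟩),
                  if_pos (show 0 < a j ∧ a q < 0 from ⟨hj0, hq⟩),
                  if_neg hjq, if_pos trivial, if_pos hj0, if_pos hq,
                  mul_assoc, ← mul_assoc (-(a q)) ((-(a q))⁻¹),
                  mul_inv_cancel₀ (neg_ne_zero.mpr hq.ne), one_mul]
              · rw [if_neg (show ¬(0 < a j ∧ a q < 0) from fun h => hq h.2),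
                  if_neg (show ¬(0 < a j ∧ a q < 0) from fun h => hq h.2),
                  if_pos hj0, if_neg hq, zero_mul, mul_zero, mul_zero, mul_zero]
            · rw [if_neg (show ¬(0 < a j ∧ a q < 0) from fun h => hj0 h.1),
                if_neg (show ¬(0 < a j ∧ a q < 0) from fun h => hj0 h.1),
                if_neg hj0, zero_mul]
          · intro p _ hp
            simp only [hG, hY, Sum.elim_inr]
            by_cases hc : 0 < a p ∧ a q < 0
            · have hjq : j ≠ q := by
                rintro rfl
                exact absurd hc.2 (not_lt.mpr hj)
              rw [if_pos hc, if_pos hc, if_neg hjq, if_neg (Ne.symm hp), zero_mul]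
            · rw [if_neg hc, if_neg hc, zero_mul]
          · intro h
            exact absurd (Finset.mem_univ j) h
        rw [Finset.sum_congr rfl (fun q _ => hB q)]
        by_cases hj0 : 0 < a j
        · simp only [if_pos hj0]
          rw [← Finset.mul_sum, ← Finset.mul_sum, ← Finset.mul_sum, ← hsm]
          simp only [hY, Sum.elim_inl, if_pos hj0]
          rw [← mul_assoc ((a j)⁻¹), ← mul_assoc ((a j)⁻¹ * (a j * ξ j))]
          rw [show (a j)⁻¹ * (a j * ξ j) = ξ j by
            rw [← mul_assoc, inv_mul_cancel₀ hj0.ne', one_mul]]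
          rw [mul_assoc (ξ j), ← mul_add, ← mul_add, sub_add_cancel]
          rcases eq_or_ne sp 0 with h0 | h0
          · rw [hzero h0 j hj0.ne', zero_mul]
          · rw [inv_mul_cancel₀ h0, mul_one]
        · simp only [if_neg hj0, Finset.sum_const_zero, add_zero, hY, Sum.elim_inl,
            if_pos hj]
  · rintro ⟨Y, hY, rfl⟩
    have htransport : ∀ j, ∑ i, G (eI i) j * Y i = ∑ w, G w j * Y (eI.symm w) := by
      intro j
      refine Fintype.sum_equiv eI _ _ (fun i => ?_)
      rw [Equiv.symm_apply_apply]
    have hGnn : ∀ w j, 0 ≤ G w j := by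
      intro w j
      obtain p | pq := w
      · simp only [hG, Sum.elim_inl]
        split_ifs
        · exact hone
        · exact le_rfl
        · exact le_rfl
      · simp only [hG, Sum.elim_inr]
        split_ifs with h1 h2 h3
        · exact hone
        · exact hmul _ _ (hinv _ h1.1) (hneg _ h1.2.le)
        · exact le_rfl
        · exact le_rfl
    have hGrow : ∀ w, 0 ≤ ∑ j, a j * G w j := by
      intro w
      obtain p | pq := w
      · simp only [hG, Sum.elim_inl]
        by_cases h : 0 ≤ a p
        · rw [Finset.sum_eq_single p]
          · rw [if_pos h, if_pos rfl, mul_one]; exact h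
          · intro j _ hj
            rw [if_pos h, if_neg hj, mul_zero]
          · simp
        · simp [h]
      · simp only [hG, Sum.elim_inr]
        by_cases h : 0 < a pq.1 ∧ a pq.2 < 0
        · have hne : pq.2 ≠ pq.1 := by
            intro he
            rw [he] at h
            exact absurd h.1 (not_lt.mpr h.2.le)
          have : ∑ j, a j * (if 0 < a pq.1 ∧ a pq.2 < 0 then
              (if j = pq.2 then (1:K) else if j = pq.1 then (a pq.1)⁻¹ * (-(a pq.2)) else 0)
              else 0)
              = ∑ j, ((if j = pq.2 then a pq.2 else 0)
                  + (if j = pq.1 then a pq.1 * ((a pq.1)⁻¹ * (-(a pq.2))) else 0)) := by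
            refine Finset.sum_congr rfl (fun j _ => ?_)
            rw [if_pos h]
            by_cases h2 : j = pq.2
            · rw [if_pos h2, if_pos h2, if_neg (h2 ▸ hne), mul_one, add_zero, h2]
            · rw [if_neg h2, if_neg h2, zero_add]
              by_cases h1 : j = pq.1
              · rw [if_pos h1, if_pos h1, h1]
              · rw [if_neg h1, if_neg h1, mul_zero]
          rw [this, Finset.sum_add_distrib, Finset.sum_ite_eq', Finset.sum_ite_eq',
            if_pos (Finset.mem_univ _), if_pos (Finset.mem_univ _),
            ← mul_assoc, mul_inv_cancel₀ h.1.ne', one_mul, add_neg_cancel]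
        · simp [h]
    constructor
    · have : ∑ j, a j * ∑ i, G (eI i) j * Y i
          = ∑ w, (∑ j, a j * G w j) * Y (eI.symm w) := by
        rw [Finset.sum_congr rfl (fun j _ => by rw [htransport j])]
        rw [Finset.sum_congr rfl (fun j (_ : j ∈ Finset.univ) => Finset.mul_sum _ _ _)]
        rw [Finset.sum_comm]
        refine Finset.sum_congr rfl (fun w _ => ?_)
        rw [Finset.sum_mul]
        exact Finset.sum_congr rfl (fun j _ => (mul_assoc _ _ _).symm)
      rw [this]
      refine Finset.sum_induction _ (fun x => 0 ≤ x) (fun _ _ => haddnn _ _) le_rfl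
        (fun w _ => hmul _ _ (hGrow w) (hY _))
    · intro j
      refine Finset.sum_induction _ (fun x => 0 ≤ x) (fun _ _ => haddnn _ _) le_rfl
        (fun i _ => hmul _ _ (hGnn _ _) (hY i))
end

section
/- Let n ≥ 1 and let K be a convex polyhedral cone of ℚⁿ. Then K is positively generated by a finite subset: there exists a finite set X ⊆ ℚⁿ such that K = { Σ_{x ∈ X} λ_x x | λ_x ∈ ℚ, λ_x ≥ 0 for all x ∈ X }. -/
open Finset

namespace ConeFG

variable {V : Type*} [AddCommGroup V] [Module ℚ V]

variable {V : Type*} [AddCommGroup V] [Module ℚ V]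

def coneSet {ι : Type*} [Fintype ι] (v : ι → V) : Set V :=
  {x | ∃ lam : ι → ℚ, (∀ i, 0 ≤ lam i) ∧ x = ∑ i, lam i • v i}

/-- Fourier–Motzkin generators for `cone v ∩ {x | 0 ≤ f x}`. -/
def elimGen {ι : Type*} (v : ι → V) (f : V →ₗ[ℚ] ℚ) : ι ⊕ ι × ι → V
  | Sum.inl i => if 0 ≤ f (v i) then v i else 0
  | Sum.inr (i, j) =>
      if 0 < f (v i) ∧ f (v j) < 0 then f (v i) • v j - f (v j) • v i else 0

theorem coneSet_inter_halfspace {ι : Type*} [Fintype ι] (v : ι → V) (f : V →ₗ[ℚ] ℚ) :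
    coneSet v ∩ {x | 0 ≤ f x} = coneSet (elimGen v f) := by
  ext x
  constructor
  · rintro ⟨⟨lam, hlam, hx⟩, hfx⟩
    have hfx' : (0:ℚ) ≤ f x := hfx
    set A : ℚ := ∑ i, if 0 < f (v i) then lam i * f (v i) else 0 with hA_def
    set B : ℚ := ∑ i, if f (v i) < 0 then lam i * (-(f (v i))) else 0 with hB_def
    have hA_nonneg : 0 ≤ A := by
      apply Finset.sum_nonneg
      intro i _
      split
      · next h => exact mul_nonneg (hlam i) (le_of_lt h)
      · exact le_rfl
    have hB_nonneg : 0 ≤ B := by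
      apply Finset.sum_nonneg
      intro i _
      split
      · next h => exact mul_nonneg (hlam i) (by linarith)
      · exact le_rfl
    have hAB : A - B = f x := by
      rw [hx, map_sum]
      rw [hA_def, hB_def, ← Finset.sum_sub_distrib]
      apply Finset.sum_congr rfl
      intro i _
      rw [map_smul]
      rcases lt_trichotomy (f (v i)) 0 with h | h | h
      · rw [if_neg (by linarith), if_pos h]; ring_nf
      · rw [if_neg (by linarith), if_neg (by linarith)]; simp [h]
      · rw [if_pos h, if_neg (by linarith)]; ring_nf
    rcases eq_or_lt_of_le hB_nonneg with hB0 | hBpos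
    · -- B = 0 : all coefficients on negative generators vanish
      have hzero : ∀ i, f (v i) < 0 → lam i = 0 := by
        intro i hi
        have h := (Finset.sum_eq_zero_iff_of_nonneg (fun j _ => by
          split
          · next h => exact mul_nonneg (hlam j) (by linarith)
          · exact le_rfl)).1 hB0.symm i (Finset.mem_univ i)
        rw [if_pos hi] at h
        have : -(f (v i)) ≠ 0 := by linarith
        exact (mul_eq_zero.1 h).resolve_right this
      refine ⟨Sum.elim (fun i => if 0 ≤ f (v i) then lam i else 0) (fun _ => 0), ?_, ?_⟩
      · rintro (i | ij)
        · simp only [Sum.elim_inl]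
          split
          · exact hlam i
          · exact le_rfl
        · simp
      · rw [hx, Fintype.sum_sum_type]
        simp only [Sum.elim_inl, Sum.elim_inr, zero_smul, Finset.sum_const_zero, add_zero]
        apply Finset.sum_congr rfl
        intro i _
        by_cases h : 0 ≤ f (v i)
        · simp [elimGen, h]
        · rw [hzero i (by linarith)]
          simp [elimGen, h]
    · -- B > 0, hence A > 0
      have hApos : 0 < A := by linarith
      have hAne : A ≠ 0 := ne_of_gt hApos
      refine ⟨Sum.elim
          (fun i => if 0 < f (v i) then lam i * (A - B) / A else if 0 ≤ f (v i) then lam i else 0)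
          (fun ij => if 0 < f (v ij.1) ∧ f (v ij.2) < 0 then lam ij.1 * lam ij.2 / A else 0),
          ?_, ?_⟩
      · rintro (i | ij)
        · simp only [Sum.elim_inl]
          split
          · exact div_nonneg (mul_nonneg (hlam i) (by linarith)) hA_nonneg
          · split
            · exact hlam i
            · exact le_rfl
        · simp only [Sum.elim_inr]
          split
          · exact div_nonneg (mul_nonneg (hlam ij.1) (hlam ij.2)) hA_nonneg
          · exact le_rfl
      · rw [hx, Fintype.sum_sum_type, Fintype.sum_prod_type]
        simp only [Sum.elim_inl, Sum.elim_inr]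
        have key : ∀ i j, (if 0 < f (v i) ∧ f (v j) < 0 then lam i * lam j / A else 0) •
              elimGen v f (Sum.inr (i, j))
            = ((if 0 < f (v i) then lam i * f (v i) / A else 0) *
                (if f (v j) < 0 then lam j else 0)) • v j
              + ((if 0 < f (v i) then lam i / A else 0) *
                (if f (v j) < 0 then lam j * (-(f (v j))) else 0)) • v i := by
          intro i j
          by_cases h1 : 0 < f (v i)
          · by_cases h2 : f (v j) < 0
            · have hc : 0 < f (v i) ∧ f (v j) < 0 := ⟨h1, h2⟩
              simp only [elimGen, if_pos hc, if_pos h1, if_pos h2]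
              match_scalars <;> ring
            · simp [elimGen, h1, h2]
          · simp [elimGen, h1]
        have hg1 : (∑ i, if 0 < f (v i) then lam i * f (v i) / A else 0) = 1 := by
          have hpt : ∀ i, (if 0 < f (v i) then lam i * f (v i) / A else 0)
              = (if 0 < f (v i) then lam i * f (v i) else 0) / A := by
            intro i; split <;> simp
          simp only [hpt]
          rw [← Finset.sum_div, ← hA_def, div_self hAne]
        have hinr : (∑ i, ∑ j, (if 0 < f (v i) ∧ f (v j) < 0 then lam i * lam j / A else 0) •
              elimGen v f (Sum.inr (i, j)))
            = (∑ j, (if f (v j) < 0 then lam j else 0) • v j)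
              + ∑ i, ((if 0 < f (v i) then lam i / A else 0) * B) • v i := by
          simp only [key, Finset.sum_add_distrib]
          congr 1
          · rw [Finset.sum_comm]
            apply Finset.sum_congr rfl
            intro j _
            rw [← Finset.sum_smul, ← Finset.sum_mul, hg1, one_mul]
          · apply Finset.sum_congr rfl
            intro i _
            rw [← Finset.sum_smul, ← Finset.mul_sum, ← hB_def]
        rw [hinr]
        have hinl : ∀ i, (if 0 < f (v i) then lam i * (A - B) / A
              else if 0 ≤ f (v i) then lam i else 0) • elimGen v f (Sum.inl i)
            = (if 0 < f (v i) then lam i * (A - B) / A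
              else if 0 ≤ f (v i) then lam i else 0) • v i := by
          intro i
          by_cases h : 0 ≤ f (v i)
          · simp [elimGen, h]
          · have h' : ¬ 0 < f (v i) := fun hlt => h hlt.le
            simp [elimGen, h, h']
        simp only [hinl]
        rw [← Finset.sum_add_distrib, ← Finset.sum_add_distrib]
        apply Finset.sum_congr rfl
        intro i _
        rw [← add_smul, ← add_smul]
        congr 1
        rcases lt_trichotomy (f (v i)) 0 with h | h | h
        · rw [if_neg (by linarith), if_neg (by linarith), if_pos h, if_neg (by linarith)]
          ring
        · rw [if_neg (by simp [h]), if_pos (by simp [h]), if_neg (by simp [h]),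
            if_neg (by simp [h])]
          ring
        · rw [if_pos h, if_pos h, if_neg (by linarith)]
          field_simp
          ring
  · rintro ⟨mu, hmu, hx⟩
    constructor
    · -- membership in coneSet v
      refine ⟨fun i => mu (Sum.inl i) * (if 0 ≤ f (v i) then 1 else 0)
          + (∑ j, mu (Sum.inr (j, i)) * (if 0 < f (v j) ∧ f (v i) < 0 then f (v j) else 0))
          + (∑ j, mu (Sum.inr (i, j)) * (if 0 < f (v i) ∧ f (v j) < 0 then -(f (v j)) else 0)),
        fun i => ?_, ?_⟩
      · have t1 : 0 ≤ mu (Sum.inl i) * (if 0 ≤ f (v i) then 1 else 0) := by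
          apply mul_nonneg (hmu _); split <;> norm_num
        have t2 : 0 ≤ ∑ j, mu (Sum.inr (j, i)) *
            (if 0 < f (v j) ∧ f (v i) < 0 then f (v j) else 0) := by
          apply Finset.sum_nonneg
          intro j _
          apply mul_nonneg (hmu _)
          split
          · next h => exact le_of_lt h.1
          · exact le_rfl
        have t3 : 0 ≤ ∑ j, mu (Sum.inr (i, j)) *
            (if 0 < f (v i) ∧ f (v j) < 0 then -(f (v j)) else 0) := by
          apply Finset.sum_nonneg
          intro j _
          apply mul_nonneg (hmu _)
          split
          · next h => linarith [h.2]
          · exact le_rfl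
        exact add_nonneg (add_nonneg t1 t2) t3
      · rw [hx, Fintype.sum_sum_type, Fintype.sum_prod_type]
        have key2 : ∀ i j, mu (Sum.inr (i, j)) • elimGen v f (Sum.inr (i, j))
            = (mu (Sum.inr (i, j)) * (if 0 < f (v i) ∧ f (v j) < 0 then f (v i) else 0)) • v j
              + (mu (Sum.inr (i, j)) *
                  (if 0 < f (v i) ∧ f (v j) < 0 then -(f (v j)) else 0)) • v i := by
          intro i j
          by_cases hc : 0 < f (v i) ∧ f (v j) < 0
          · simp only [elimGen, if_pos hc]
            match_scalars <;> ring
          · simp [elimGen, hc]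
        have hL1 : ∑ i, mu (Sum.inl i) • elimGen v f (Sum.inl i)
            = ∑ i, (mu (Sum.inl i) * (if 0 ≤ f (v i) then 1 else 0)) • v i := by
          apply Finset.sum_congr rfl
          intro i _
          by_cases h : 0 ≤ f (v i) <;> simp [elimGen, h]
        have hL2 : ∑ i, ∑ j, mu (Sum.inr (i, j)) • elimGen v f (Sum.inr (i, j))
            = ∑ i, ((∑ j, mu (Sum.inr (j, i)) *
                  (if 0 < f (v j) ∧ f (v i) < 0 then f (v j) else 0))
                + (∑ j, mu (Sum.inr (i, j)) *
                  (if 0 < f (v i) ∧ f (v j) < 0 then -(f (v j)) else 0))) • v i := by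
          simp only [key2, Finset.sum_add_distrib, add_smul, Finset.sum_smul]
          congr 1
          exact Finset.sum_comm
        rw [hL1, hL2, ← Finset.sum_add_distrib]
        apply Finset.sum_congr rfl
        intro i _
        module
    · -- 0 ≤ f x
      rw [Set.mem_setOf_eq, hx, map_sum]
      apply Finset.sum_nonneg
      intro s _
      rw [map_smul, smul_eq_mul]
      apply mul_nonneg (hmu s)
      rcases s with i | ⟨i, j⟩
      · simp only [elimGen]
        split
        · next h => exact h
        · simp
      · simp only [elimGen]
        split
        · next h => simp [mul_comm]
        · simp

theorem coneSet_reindex {ι κ : Type*} [Fintype ι] [Fintype κ] (e : ι ≃ κ) (v : κ → V) :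
    coneSet (v ∘ e) = coneSet v := by
  ext x
  constructor
  · rintro ⟨lam, h1, h2⟩
    refine ⟨lam ∘ e.symm, fun i => h1 _, ?_⟩
    rw [h2]
    exact Fintype.sum_equiv e _ _ (by simp)
  · rintro ⟨lam, h1, h2⟩
    refine ⟨lam ∘ e, fun i => h1 _, ?_⟩
    rw [h2]
    exact (Fintype.sum_equiv e _ _ (by simp)).symm

theorem coneSet_exists_fin {ι : Type*} [Fintype ι] (w : ι → V) :
    ∃ (k : ℕ) (v : Fin k → V), coneSet w = coneSet v :=
  ⟨Fintype.card ι, w ∘ (Fintype.equivFin ι).symm, (coneSet_reindex _ _).symm⟩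

theorem coneSet_univ (n : ℕ) :
    coneSet (Sum.elim (fun i : Fin n => Pi.single i (1:ℚ))
      (fun i : Fin n => -Pi.single i (1:ℚ))) = Set.univ := by
  have hsingle : ∀ (c : ℚ) (i : Fin n), c • (Pi.single i (1:ℚ) : Fin n → ℚ) = Pi.single i c := by
    intro c i
    ext j
    by_cases h : j = i <;> simp [Pi.single_apply, h]
  ext x
  simp only [Set.mem_univ, iff_true]
  refine ⟨Sum.elim (fun i => max (x i) 0) (fun i => max (-(x i)) 0), ?_, ?_⟩
  · rintro (i | i) <;> simp [le_max_right]
  · symm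
    rw [Fintype.sum_sum_type]
    simp only [Sum.elim_inl, Sum.elim_inr, smul_neg, Finset.sum_neg_distrib,
      ← sub_eq_add_neg, ← Finset.sum_sub_distrib]
    have : ∀ i, max (x i) 0 • (Pi.single i (1:ℚ) : Fin n → ℚ)
        - max (-(x i)) 0 • (Pi.single i (1:ℚ) : Fin n → ℚ)
        = (Pi.single i (x i) : Fin n → ℚ) := by
      intro i
      rw [hsingle, hsingle, ← Pi.single_sub]
      have hmax : max (x i) 0 - max (-(x i)) 0 = x i := by
        rcases le_total (x i) 0 with h | h
        · rw [max_eq_right h, max_eq_left (by linarith)]; ring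
        · rw [max_eq_left h, max_eq_right (by linarith)]; ring
      rw [hmax]
    simp only [this]
    exact Finset.univ_sum_single x


theorem halfspaces_eq_coneSet (n : ℕ) :
    ∀ (m : ℕ) (p : Fin m → ((Fin n → ℚ) →ₗ[ℚ] ℚ)),
      ∃ (k : ℕ) (v : Fin k → (Fin n → ℚ)),
        {x : Fin n → ℚ | ∀ i, 0 ≤ p i x} = coneSet v := by
  intro m
  induction m with
  | zero =>
    intro p
    obtain ⟨k, v, hv⟩ := coneSet_exists_fin
      (Sum.elim (fun i : Fin n => Pi.single i (1:ℚ)) (fun i : Fin n => -Pi.single i (1:ℚ)))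
    refine ⟨k, v, ?_⟩
    rw [← hv, coneSet_univ]
    ext x
    simp [Fin.elim0]
  | succ m ih =>
    intro p
    obtain ⟨k, v, hv⟩ := ih (fun i => p i.succ)
    obtain ⟨k', v', hv'⟩ := coneSet_exists_fin (elimGen v (p 0))
    refine ⟨k', v', ?_⟩
    rw [← hv', ← coneSet_inter_halfspace, ← hv]
    ext x
    constructor
    · intro h
      exact ⟨fun i => h i.succ, h 0⟩
    · rintro ⟨h1, h2⟩ i
      rcases Fin.eq_zero_or_eq_succ i with rfl | ⟨j, rfl⟩
      · exact h2
      · exact h1 j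

end ConeFG

/-- Let `n ≥ 1` and let `K` be a convex polyhedral cone of `ℚⁿ`, i.e. a
finite intersection of closed half-spaces `{x | pᵢ(x) ≥ 0}` with each `pᵢ` a nonzero linear
functional.  Then `K` is positively generated by a finite subset: there are finitely many
vectors `v₁,…,v_k ∈ ℚⁿ` such that `K` is the set of their linear combinations with
nonnegative rational coefficients. -/
theorem convexPolyhedralCone_fg
    (n : ℕ) (hn : 1 ≤ n) (m : ℕ) (p : Fin m → ((Fin n → ℚ) →ₗ[ℚ] ℚ)) (hp : ∀ i, p i ≠ 0) :
    ∃ (k : ℕ) (v : Fin k → (Fin n → ℚ)),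
      {x : Fin n → ℚ | ∀ i, 0 ≤ p i x}
        = {x : Fin n → ℚ | ∃ lam : Fin k → ℚ, (∀ i, 0 ≤ lam i) ∧ x = ∑ i, lam i • v i} := by
  exact ConeFG.halfspaces_eq_coneSet n m p
end

section
/- Let n, m ≥ 1, let K be a polyhedral cone of ℚⁿ, and let f₁, …, f_m : K → ℚ be piecewise linear maps. Then the set {(λ₁,…,λ_m) ∈ ℤᵐ | λᵢ ≥ 0 for all i, and λ₁f₁(x) + ⋯ + λ_m f_m(x) ≥ 0 for all x ∈ K} is a finitely generated additive submonoid of ℤᵐ. -/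
/-- A *convex polyhedral cone* of `ℚⁿ`: a finite intersection of closed half-spaces
`{x | p(x) ≥ 0}` for nonzero linear functionals `p`. -/
def IsConvexPolyhedralCone (n : ℕ) (K : Set (Fin n → ℚ)) : Prop :=
  ∃ (m : ℕ) (p : Fin m → ((Fin n → ℚ) →ₗ[ℚ] ℚ)), (∀ i, p i ≠ 0) ∧
    K = {x : Fin n → ℚ | ∀ i, 0 ≤ p i x}

/-- A *polyhedral cone* of `ℚⁿ`: a finite union of convex polyhedral cones. -/
def IsPolyhedralCone (n : ℕ) (K : Set (Fin n → ℚ)) : Prop :=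
  ∃ (N : ℕ) (C : Fin N → Set (Fin n → ℚ)), (∀ l, IsConvexPolyhedralCone n (C l)) ∧
    K = ⋃ l, C l

/-- A map `f` is *piecewise linear* on a polyhedral cone `K` if `K` decomposes as a finite
union of convex polyhedral cones on each of which `f` agrees with a linear functional. -/
def IsPiecewiseLinearOn (n : ℕ) (K : Set (Fin n → ℚ)) (f : (Fin n → ℚ) → ℚ) : Prop :=
  ∃ (N : ℕ) (C : Fin N → Set (Fin n → ℚ)), (∀ l, IsConvexPolyhedralCone n (C l)) ∧
    K = ⋃ l, C l ∧ ∀ l, ∃ g : (Fin n → ℚ) →ₗ[ℚ] ℚ, ∀ x ∈ C l, f x = g x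

/-!
Cut `K` into finitely many convex polyhedral cones on each of which every `fᵢ` is linear
(a common refinement of the given decompositions). By Fourier–Motzkin elimination each piece is
the conic hull of finitely many vectors, and a linear functional is nonnegative on a conic hull
iff it is nonnegative on the generators. So the condition on `λ` becomes finitely many linear
inequalities with rational, hence after scaling integer, coefficients. The solutions in `ℕᵐ` of
such a system form a finitely generated monoid (Gordan's lemma): embedding `λ ↦ (λ, Aλ)` turns it
into the nonnegative part of a subgroup of `ℤᵏ`, which is generated by its minimal nonzero
elements, finitely many by Dickson's lemma.
-/

open Finset PointedCone

namespace PointedCone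

variable {𝕜 V : Type*} [Field 𝕜] [LinearOrder 𝕜] [IsStrictOrderedRing 𝕜] [AddCommGroup V]
  [Module 𝕜 V]

theorem sum_smul_mem {C : PointedCone 𝕜 V} {ι : Type*} (s : Finset ι) {a : ι → 𝕜} {v : ι → V}
    (ha : ∀ i ∈ s, 0 ≤ a i) (hv : ∀ i ∈ s, v i ∈ C) : ∑ i ∈ s, a i • v i ∈ C :=
  sum_mem fun i hi => C.smul_mem (ha i hi) (hv i hi)

theorem mem_dual_id_singleton {q : V →ₗ[𝕜] 𝕜} {x : V} : x ∈ dual .id {q} ↔ 0 ≤ q x := by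
  simp

theorem forall_mem_hull_nonneg_iff {s : Set V} {h : V →ₗ[𝕜] 𝕜} :
    (∀ x ∈ hull 𝕜 s, 0 ≤ h x) ↔ ∀ x ∈ s, 0 ≤ h x :=
  SetLike.ext_iff.1 (dual_hull (p := LinearMap.id.flip) s) h

section FourierMotzkin

variable [DecidableEq V]

def fourierMotzkin (q : V →ₗ[𝕜] 𝕜) (G : Finset V) : Finset V :=
  G.filter (0 ≤ q ·) ∪ (G.filter (0 ≤ q ·) ×ˢ G.filter (q · < 0)).image
    fun rs => q rs.1 • rs.2 - q rs.2 • rs.1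

theorem sum_smul_mem_hull_fourierMotzkin (q : V →ₗ[𝕜] 𝕜) (G : Finset V) {a : V → 𝕜}
    (ha : ∀ v, 0 ≤ a v) (hq : 0 ≤ q (∑ v ∈ G, a v • v)) :
    ∑ v ∈ G, a v • v ∈ hull 𝕜 (fourierMotzkin q G : Set V) := by
  set P := G.filter (0 ≤ q ·)
  set N := G.filter (q · < 0)
  set W := hull 𝕜 (fourierMotzkin q G : Set V)
  set u := ∑ r ∈ P, a r • r
  set y := ∑ s ∈ N, a s • s
  set A := ∑ r ∈ P, a r * q r
  set B := ∑ s ∈ N, a s * q s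
  have hx : ∑ v ∈ G, a v • v = u + y := by
    simp only [u, y, P, N, ← not_le, sum_filter_add_sum_filter_not]
  have hqx : q (u + y) = A + B := by simp [u, y, A, B, map_sum]
  have hu : u ∈ W := sum_smul_mem P (fun r _ => ha r) fun r hr =>
    subset_hull (mem_coe.2 (mem_union_left _ hr))
  have hcross : A • y - B • u ∈ W := by
    have : A • y - B • u = ∑ r ∈ P, ∑ s ∈ N, (a r * a s) • (q r • s - q s • r) := by
      simp only [A, B, u, y, smul_sub, sum_sub_distrib, sum_smul_sum]
      rw [sum_comm (s := N)]
      congr 1 <;> exact sum_congr rfl fun _ _ => sum_congr rfl fun _ _ => by module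
    rw [this]
    refine sum_mem fun r hr => sum_smul_mem N (fun s _ => mul_nonneg (ha r) (ha s)) fun s hs => ?_
    exact subset_hull (mem_coe.2 (mem_union_right _
      (mem_image.2 ⟨(r, s), mem_product.2 ⟨hr, hs⟩, rfl⟩)))
  rw [hx, hqx] at hq
  rw [hx]
  have hterm : ∀ s ∈ N, a s * q s ≤ 0 := fun s hs =>
    mul_nonpos_of_nonneg_of_nonpos (ha s) (mem_filter.1 hs).2.le
  have hB : B ≤ 0 := sum_nonpos hterm
  rcases (show 0 ≤ A by linarith).eq_or_lt with hA | hA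
  · have hy : y = 0 := by
      have hB0 := (sum_eq_zero_iff_of_nonpos hterm).1 (show B = 0 by linarith)
      refine sum_eq_zero fun s hs => ?_
      rw [(mul_eq_zero.1 (hB0 s hs)).resolve_right (mem_filter.1 hs).2.ne, zero_smul]
    rwa [hy, add_zero]
  · -- `A • x` is `q x • u` plus the cross term, a nonnegative combination of new generators.
    rw [← W.smul_mem_iff hA, show A • (u + y) = (A + B) • u + (A • y - B • u) by module]
    exact add_mem (W.smul_mem hq hu) hcross

theorem hull_fourierMotzkin (q : V →ₗ[𝕜] 𝕜) (G : Finset V) :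
    hull 𝕜 (fourierMotzkin q G : Set V) = dual .id {q} ⊓ hull 𝕜 (G : Set V) := by
  refine le_antisymm (Submodule.span_le.2 fun w hw => ?_) fun x ⟨hqx, hx⟩ => ?_
  · simp only [fourierMotzkin, coe_union, coe_filter, coe_image, coe_product, Set.mem_union,
      Set.mem_image, Set.mem_prod, Set.mem_ofPred_eq] at hw
    rcases hw with ⟨hwG, hqw⟩ | ⟨⟨r, s⟩, ⟨⟨hr, hqr⟩, hs, hqs⟩, rfl⟩
    · exact ⟨mem_dual_id_singleton.2 hqw, subset_hull hwG⟩
    · refine ⟨mem_dual_id_singleton.2 (by simp [mul_comm]), ?_⟩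
      rw [sub_eq_add_neg, ← neg_smul]
      exact add_mem (smul_mem _ hqr (subset_hull hs))
        (smul_mem _ (neg_nonneg.2 hqs.le) (subset_hull hr))
  · obtain ⟨c, -, rfl⟩ := Submodule.mem_span_finset.1 hx
    exact sum_smul_mem_hull_fourierMotzkin q G (a := fun v => (c v : 𝕜)) (fun v => (c v).2)
      (mem_dual_id_singleton.1 hqx)

end FourierMotzkin

theorem FG.dual_singleton_inf {C : PointedCone 𝕜 V} (hC : C.FG) (q : V →ₗ[𝕜] 𝕜) :
    (dual .id {q} ⊓ C).FG := by
  classical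
  obtain ⟨G, rfl⟩ := hC
  exact ⟨_, hull_fourierMotzkin q G⟩

theorem fg_top [Module.Finite 𝕜 V] : (⊤ : PointedCone 𝕜 V).FG := by
  simpa using (Module.Finite.fg_top (R := 𝕜) (M := V)).restrictScalars (R := {c : 𝕜 // 0 ≤ c})

theorem DualFG.fg [Module.Finite 𝕜 V] {M : Type*} [AddCommGroup M] [Module 𝕜 M]
    {p : M →ₗ[𝕜] V →ₗ[𝕜] 𝕜} {C : PointedCone 𝕜 V} (hC : C.DualFG p) : C.FG := by
  classical
  suffices ∀ s : Finset (V →ₗ[𝕜] 𝕜), (dual .id (s : Set (V →ₗ[𝕜] 𝕜))).FG by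
    obtain ⟨s, rfl⟩ := hC.id
    exact this s
  intro s
  induction s using Finset.induction_on with
  | empty => simpa using fg_top
  | insert q s _ ih => simpa only [coe_insert, dual_insert] using FG.dual_singleton_inf ih q

end PointedCone

theorem AddSubgroup.fg_toAddSubmonoid_inf_nonneg {κ : Type*} [Finite κ]
    (L : AddSubgroup (κ → ℤ)) : (L.toAddSubmonoid ⊓ AddSubmonoid.nonneg (κ → ℤ)).FG := by
  set cast := (Nat.castAddMonoidHom ℤ).compLeft κ
  have hfg : (L.toAddSubmonoid.comap cast).FG := by
    refine AddSubmonoid.fg_of_subtractive fun v hv w hvw => ?_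
    simpa [map_add] using L.sub_mem hvw hv
  convert hfg.map cast
  refine le_antisymm ?_ ?_
  · rintro v ⟨hvL, hv⟩
    have : cast (fun k => (v k).toNat) = v := funext fun k => by simpa [cast] using hv k
    exact ⟨_, by simpa [this] using hvL, this⟩
  · rintro _ ⟨w, hw, rfl⟩
    exact ⟨hw, fun k => by simp [cast]⟩

theorem exists_fg_eq_nonneg_solutions {ι κ : Type*} [Fintype ι] [Finite κ] (b : κ → ι → ℤ) :
    ∃ P : AddSubmonoid (ι → ℤ), P.FG ∧
      (P : Set (ι → ℤ)) = {lam | (∀ i, 0 ≤ lam i) ∧ ∀ k, 0 ≤ ∑ i, lam i * b k i} := by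
  let e : (ι → ℤ) →+ (ι ⊕ κ → ℤ) :=
    AddMonoidHom.mk' (fun lam => Sum.elim lam fun k => ∑ i, lam i * b k i)
      fun lam mu => by ext (i | k) <;> simp [add_mul, sum_add_distrib]
  refine ⟨_, e.range.fg_toAddSubmonoid_inf_nonneg.map
    (LinearMap.funLeft ℤ ℤ Sum.inl).toAddMonoidHom, Set.ext fun lam => ?_⟩
  simp only [AddSubmonoid.coe_map, Set.mem_image, SetLike.mem_coe, AddSubmonoid.mem_inf,
    AddSubgroup.mem_toAddSubmonoid, AddMonoidHom.mem_range, AddSubmonoid.mem_nonneg,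
    Set.mem_ofPred_eq]
  constructor
  · rintro ⟨_, ⟨⟨mu, rfl⟩, hmu⟩, rfl⟩
    exact ⟨fun i => hmu (.inl i), fun k => hmu (.inr k)⟩
  · rintro ⟨hlam, hb⟩
    exact ⟨e lam, ⟨⟨lam, rfl⟩, fun | .inl i => hlam i | .inr k => hb k⟩, rfl⟩

theorem exists_pos_mul_eq_intCast {ι : Type*} [Fintype ι] (a : ι → ℚ) :
    ∃ d : ℚ, 0 < d ∧ ∃ b : ι → ℤ, ∀ i, (b i : ℚ) = d * a i := by
  classical
  refine ⟨∏ j, ((a j).den : ℚ), by positivity,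
    fun i => (∏ j ∈ univ.erase i, ((a j).den : ℤ)) * (a i).num, fun i => ?_⟩
  rw [← mul_prod_erase univ _ (mem_univ i)]
  push_cast
  rw [← Rat.den_mul_eq_num]
  ring

theorem exists_fg_eq_nonneg_solutions_rat {ι κ : Type*} [Fintype ι] [Finite κ]
    (a : κ → ι → ℚ) :
    ∃ P : AddSubmonoid (ι → ℤ), P.FG ∧
      (P : Set (ι → ℤ)) = {lam | (∀ i, 0 ≤ lam i) ∧ ∀ k, 0 ≤ ∑ i, (lam i : ℚ) * a k i} := by
  choose d hd b hb using fun k => exists_pos_mul_eq_intCast (a k)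
  obtain ⟨P, hP, hPset⟩ := exists_fg_eq_nonneg_solutions b
  refine ⟨P, hP, hPset.trans <| Set.ext fun lam =>
    and_congr_right fun _ => forall_congr' fun k => ?_⟩
  have : ((∑ i, lam i * b k i : ℤ) : ℚ) = d k * ∑ i, (lam i : ℚ) * a k i := by
    push_cast [hb, mul_sum]
    exact sum_congr rfl fun i _ => by ring
  rw [← Int.cast_nonneg_iff (R := ℚ), this, mul_nonneg_iff_of_pos_left (hd k)]

theorem IsConvexPolyhedralCone.exists_finite_dual_eq {n : ℕ} {K : Set (Fin n → ℚ)}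
    (hK : IsConvexPolyhedralCone n K) :
    ∃ s : Set ((Fin n → ℚ) →ₗ[ℚ] ℚ), s.Finite ∧ K = dual .id s := by
  obtain ⟨k, p, -, rfl⟩ := hK
  exact ⟨Set.range p, Set.finite_range p, by ext; simp⟩

theorem nonneg_on_iUnion_hull_iff {𝕜 V ι J : Type*} [Field 𝕜] [LinearOrder 𝕜]
    [IsStrictOrderedRing 𝕜] [AddCommGroup V] [Module 𝕜 V] [Fintype ι] {G : J → Set V}
    {f : ι → V → 𝕜} {g : ι → J → V →ₗ[𝕜] 𝕜} (hfg : ∀ i j, ∀ x ∈ hull 𝕜 (G j), f i x = g i j x)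
    (c : ι → 𝕜) :
    (∀ x ∈ ⋃ j, (hull 𝕜 (G j) : Set V), 0 ≤ ∑ i, c i * f i x) ↔
      ∀ j, ∀ v ∈ G j, 0 ≤ ∑ i, c i * g i j v := by
  simp only [Set.mem_iUnion, forall_exists_index]
  refine forall_comm.trans (forall_congr' fun j => ?_)
  have hsum : ∀ x ∈ hull 𝕜 (G j), ∑ i, c i * f i x = (∑ i, c i • g i j) x := fun x hx => by
    simp [hfg _ j x hx]
  refine (forall₂_congr fun x hx => by rw [hsum x hx]).trans (forall_mem_hull_nonneg_iff.trans ?_)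
  simp

theorem exists_hull_cover_of_isPiecewiseLinearOn {n m : ℕ} {K : Set (Fin n → ℚ)}
    (hK : IsPolyhedralCone n K) {f : Fin m → (Fin n → ℚ) → ℚ}
    (hf : ∀ i, IsPiecewiseLinearOn n K (f i)) :
    ∃ (J : Type) (_ : Fintype J) (G : J → Finset (Fin n → ℚ))
      (g : Fin m → J → (Fin n → ℚ) →ₗ[ℚ] ℚ),
      K = ⋃ j, (hull ℚ (G j : Set (Fin n → ℚ)) : Set (Fin n → ℚ)) ∧
        ∀ i j, ∀ x ∈ hull ℚ (G j : Set (Fin n → ℚ)), f i x = g i j x := by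
  obtain ⟨N₀, C₀, hC₀, rfl⟩ := hK
  choose N C hC hcover g hg using hf
  choose s₀ hs₀ hC₀s using fun j => (hC₀ j).exists_finite_dual_eq
  choose s hs hCs using fun i l => (hC i l).exists_finite_dual_eq
  choose G hG using fun jl : Fin N₀ × ∀ i, Fin (N i) =>
    (DualFG.dual_of_finite .id ((hs₀ jl.1).union (Set.finite_iUnion fun i => hs i (jl.2 i)))).fg
  have hmem jl x :
      x ∈ hull ℚ (G jl : Set (Fin n → ℚ)) ↔ x ∈ C₀ jl.1 ∧ ∀ i, x ∈ C i (jl.2 i) := by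
    rw [hull, hG, dual_union, dual_iUnion, Submodule.mem_inf, Submodule.mem_iInf, hC₀s]
    simp [hCs]
  refine ⟨_, inferInstance, G, fun i jl => g i (jl.2 i), Set.ext fun x => ?_,
    fun i jl x hx => hg i _ x (((hmem jl x).1 hx).2 i)⟩
  simp only [Set.mem_iUnion, SetLike.mem_coe, hmem]
  constructor
  · rintro ⟨j, hj⟩
    choose l hl using fun i => Set.mem_iUnion.1 (hcover i ▸ Set.mem_iUnion.2 ⟨j, hj⟩)
    exact ⟨(j, l), hj, hl⟩
  · rintro ⟨jl, hj, -⟩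
    exact ⟨jl.1, hj⟩

theorem pl_solution_monoid_fg_general
    (n m : ℕ) (K : Set (Fin n → ℚ)) (hK : IsPolyhedralCone n K)
    (f : Fin m → ((Fin n → ℚ) → ℚ)) (hf : ∀ i, IsPiecewiseLinearOn n K (f i)) :
    ∃ P : AddSubmonoid (Fin m → ℤ), P.FG ∧
      (P : Set (Fin m → ℤ))
        = {lam : Fin m → ℤ | (∀ i, 0 ≤ lam i) ∧
            ∀ x ∈ K, 0 ≤ ∑ i, (lam i : ℚ) * f i x} := by
  obtain ⟨J, _, G, g, hKG, hfg⟩ := exists_hull_cover_of_isPiecewiseLinearOn hK hf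
  obtain ⟨P, hP, hPset⟩ :=
    exists_fg_eq_nonneg_solutions_rat fun (v : Σ j, G j) i => g i v.1 v.2
  refine ⟨P, hP, hPset.trans (Set.ext fun lam => and_congr_right fun _ => ?_)⟩
  rw [hKG, nonneg_on_iUnion_hull_iff hfg]
  simp [Sigma.forall]

/-- Let `n, m ≥ 1`, let `K` be a polyhedral cone of `ℚⁿ`, and let
`f₁, …, f_m : K → ℚ` be piecewise linear.  Then
`{(λ₁,…,λ_m) ∈ ℤᵐ | λᵢ ≥ 0 for all i, and λ₁f₁(x) + ⋯ + λ_m f_m(x) ≥ 0 for all x ∈ K}`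
is a finitely generated additive submonoid of `ℤᵐ`. -/
theorem pl_solution_monoid_fg
    (n m : ℕ) (hn : 1 ≤ n) (hm : 1 ≤ m) (K : Set (Fin n → ℚ)) (hK : IsPolyhedralCone n K)
    (f : Fin m → ((Fin n → ℚ) → ℚ)) (hf : ∀ i, IsPiecewiseLinearOn n K (f i)) :
    ∃ P : AddSubmonoid (Fin m → ℤ), P.FG ∧
      (P : Set (Fin m → ℤ))
        = {lam : Fin m → ℤ | (∀ i, 0 ≤ lam i) ∧
            ∀ x ∈ K, 0 ≤ ∑ i, (lam i : ℚ) * f i x} :=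
  pl_solution_monoid_fg_general n m K hK f hf
end
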